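/- arXiv:2311.11635 — 4 statements merged into one kernel-verified Lean document; each statement's English description precedes it below -/
import Mathlib

section
/- Let T > 0 and let h ∈ H¹₀([0,T],ℝ). Suppose φ: [0,T] → ℂ is continuous with φ(0) = 0 and A: [0,T] → ℂ is measurable with A(t)² = φ(t) and Im A(t) ≥ 0 for all t ∈ [0,T], such that φ(t) = −t + 2∫₀^t A(s) h'(s) ds for all t ∈ [0,T]. Then φ(t) ∈ ℂ \ [0,∞) for all t ∈ (0,T], and consequently A(t) = √(φ(t)) for all t ∈ (0,T]. -/
open MeasureTheory Set Filter

/-- The branch of the complex square root mapping `ℂ \ [0,∞)` into the open upper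
half-plane; on `[0,∞)` it is the usual nonnegative real square root. -/
noncomputable def upSqrt (z : ℂ) : ℂ :=
  if z.im = 0 ∧ 0 ≤ z.re then (Real.sqrt z.re : ℂ)
  else Complex.I * (-z) ^ ((1 : ℂ) / 2)

/-- `z ∈ ℂ \ [0,∞)`. -/
def offPosReal (z : ℂ) : Prop := ¬(z.im = 0 ∧ 0 ≤ z.re)

/-- The Cameron–Martin space `H¹₀([0,T],ℝ)`: absolutely continuous `h` with `h 0 = 0`
and derivative `dFun ∈ L²([0,T],ℝ)`, recorded via `h t = ∫₀ᵗ h'`. -/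
structure CM (T : ℝ) where
  toFun : ℝ → ℝ
  dFun : ℝ → ℝ
  measurable_dFun : Measurable dFun
  memL2 : MeasureTheory.MemLp dFun 2 (MeasureTheory.volume.restrict (Set.Ioc 0 T))
  eq_int : ∀ t ∈ Set.Icc 0 T, toFun t = ∫ s in Set.Ioc 0 t, dFun s

/-- `φ` is the solution `φ^h`: continuous on `[0,T]`, `φ 0 = 0`, valued in
`ℂ \ [0,∞)` on `(0,T]`, and `φ t = -t + 2∫₀ᵗ √(φ s) h'(s) ds`. -/
def IsPhiH (T : ℝ) (h : CM T) (φ : ℝ → ℂ) : Prop :=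
  ContinuousOn φ (Set.Icc 0 T) ∧ φ 0 = 0 ∧
  (∀ t ∈ Set.Ioc 0 T, offPosReal (φ t)) ∧
  ∀ t ∈ Set.Icc 0 T, φ t = -(t : ℂ) + 2 * ∫ s in Set.Ioc 0 t, upSqrt (φ s) * ((h.dFun s : ℝ) : ℂ)

/-- `d` is an (integrable) a.e. derivative of `φ` on `[0,T]`, i.e. `Re φ`, `Im φ` are
absolutely continuous with `φ t = ∫₀ᵗ d`. -/
def IsDensityOn (T : ℝ) (φ : ℝ → ℂ) (d : ℝ → ℂ) : Prop :=
  MeasureTheory.IntegrableOn d (Set.Ioc 0 T) ∧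
  ∀ t ∈ Set.Icc 0 T, φ t = ∫ s in Set.Ioc 0 t, d s

/-- The rate function `I(φ) = ∫₀ᵀ (φ'(t)+1)²/(8 φ(t)) dt` for `φ ∈ D([0,T],ℂ)`
(conditions (H1),(H2),(H3)), and `+∞` otherwise.  For any admissible density `d = φ'`,
the realness condition (H3) gives `(φ'+1)²/(8φ) = (Re((φ'+1)/(2√φ)))²/2`. -/
noncomputable def rateI (T : ℝ) (φ : ℝ → ℂ) : ENNReal :=
  ⨅ (d : ℝ → ℂ) (_ : IsDensityOn T φ d ∧
      (∀ t ∈ Set.Ioc 0 T, offPosReal (φ t)) ∧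
      (∀ᵐ t ∂(MeasureTheory.volume.restrict (Set.Ioc 0 T)),
        ((d t + 1) / (2 * upSqrt (φ t))).im = 0) ∧
      MeasureTheory.MemLp (fun t => ((d t + 1) / (2 * upSqrt (φ t))).re) 2
        (MeasureTheory.volume.restrict (Set.Ioc 0 T))),
    ∫⁻ t in Set.Ioc 0 T, ENNReal.ofReal ((((d t + 1) / (2 * upSqrt (φ t))).re) ^ 2 / 2)

/-- Riemann–Stieltjes integral `∫₀ᵀ f da` in its integration-by-parts form
`f(T)a(T) - ∫₀ᵀ a(r) f'(r) dr` (for `a 0 = 0`). -/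
noncomputable def RSint (T : ℝ) (f a : ℝ → ℝ) : ℝ :=
  f T * a T - ∫ r in Set.Ioc 0 T, a r * deriv f r

/-- The functional `J_{f,g}(ξ)`. -/
noncomputable def Jfun (T : ℝ) (f g : ℝ → ℝ) (ξ : ℝ → ℂ) : ℝ :=
  (1 / 2) * (RSint T f (fun r => (ξ r).re + r) + RSint T g (fun r => (ξ r).im)) -
    (1 / 2) * ∫ r in Set.Ioc 0 T,
      (f r ^ 2 * (‖ξ r‖ + (ξ r).re) / 2 +
        g r ^ 2 * (‖ξ r‖ - (ξ r).re) / 2 + f r * g r * (ξ r).im)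

/-!
Write `posRealGap z = ‖z‖ - re z`; it vanishes exactly on `[0, ∞)`, and `posRealGap (φ t) =
2 (Im A t)²`. Along the solution this gap is nondecreasing: where `φ t ∉ [0, ∞)`, `A` is the
continuous branch `upSqrt ∘ φ`, and over a short interval `φ` moves by `-Δ + 2 ∫ A h'` with
`A ≈ A t`, which after rotation by `conj (A t) / A t` lowers the gap by at most `ε ∫ |h'|`.
Hence if `φ b ∈ [0, ∞)` for some `b > 0`, then `A` is real on `(0, b]` and
`(A t)² = -t + 2 ∫₀ᵗ A h'` there, which weighted AM-GM rules out once `4 ∫₀ᵗ h'² < 1`.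
-/

open scoped ComplexConjugate ComplexOrder Topology

section SquareRoot

open Complex

lemma offPosReal_iff_not_nonneg {z : ℂ} : offPosReal z ↔ ¬ 0 ≤ z := by
  rw [offPosReal, Complex.le_def, zero_re, zero_im, eq_comm, and_comm]

lemma offPosReal_iff_neg_mem_slitPlane {z : ℂ} : offPosReal z ↔ -z ∈ slitPlane := by
  rw [offPosReal_iff_not_nonneg, ← neg_nonpos, ← mem_slitPlane_iff_not_le_zero]

lemma isOpen_setOf_offPosReal : IsOpen {z : ℂ | offPosReal z} := by
  simp only [offPosReal_iff_neg_mem_slitPlane]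
  exact isOpen_slitPlane.preimage continuous_neg

lemma upSqrt_eq_of_offPosReal {z : ℂ} (hz : offPosReal z) :
    upSqrt z = I * (-z) ^ (2⁻¹ : ℂ) := by
  rw [upSqrt, if_neg hz, one_div]

lemma continuousAt_upSqrt {z : ℂ} (hz : offPosReal z) : ContinuousAt upSqrt z := by
  have hcont : ContinuousAt (fun w : ℂ => I * (-w) ^ (2⁻¹ : ℂ)) z :=
    continuousAt_const.mul ((continuousAt_cpow_const
      (offPosReal_iff_neg_mem_slitPlane.1 hz)).comp continuous_neg.continuousAt)
  refine hcont.congr ?_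
  filter_upwards [isOpen_setOf_offPosReal.mem_nhds hz] with w hw
  exact (upSqrt_eq_of_offPosReal hw).symm

lemma upSqrt_sq {z : ℂ} (hz : offPosReal z) : upSqrt z ^ 2 = z := by
  rw [upSqrt_eq_of_offPosReal hz, mul_pow, I_sq, cpow_ofNat_inv_pow]
  ring

lemma upSqrt_im_pos {z : ℂ} (hz : offPosReal z) : 0 < (upSqrt z).im := by
  rw [upSqrt_eq_of_offPosReal hz, I_mul_im, cpow_inv_two_re]
  have hnonpos : ¬ -(-z).re = ‖-z‖ := neg_re_eq_norm.not.2 <|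
    mem_slitPlane_iff_not_le_zero.1 (offPosReal_iff_neg_mem_slitPlane.1 hz)
  have hre : -‖-z‖ ≤ (-z).re := neg_le_of_abs_le (abs_re_le_norm _)
  refine Real.sqrt_pos_of_pos (half_pos (lt_of_le_of_ne (by linarith) fun h => hnonpos ?_))
  linarith

lemma eq_upSqrt_of_sq_eq {z a : ℂ} (hz : offPosReal z) (ha : a ^ 2 = z) (him : 0 ≤ a.im) :
    a = upSqrt z := by
  rcases sq_eq_sq_iff_eq_or_eq_neg.1 (ha.trans (upSqrt_sq hz).symm) with h | h
  · exact h
  · have := upSqrt_im_pos hz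
    rw [h, neg_im] at him
    linarith

end SquareRoot

noncomputable def posRealGap (z : ℂ) : ℝ := ‖z‖ - z.re

lemma continuous_posRealGap : Continuous posRealGap :=
  continuous_norm.sub Complex.continuous_re

lemma posRealGap_nonneg (z : ℂ) : 0 ≤ posRealGap z :=
  sub_nonneg.2 (Complex.re_le_norm z)

lemma posRealGap_pos_iff {z : ℂ} : 0 < posRealGap z ↔ offPosReal z := by
  rw [offPosReal_iff_not_nonneg, ← Complex.re_eq_norm, (posRealGap_nonneg z).lt_iff_ne',
    posRealGap, sub_ne_zero, ne_comm]

lemma posRealGap_sq (a : ℂ) : posRealGap (a ^ 2) = 2 * a.im ^ 2 := by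
  rw [posRealGap, norm_pow, Complex.sq_norm, Complex.normSq_apply, sq, Complex.mul_re]
  ring

/-- Rotating by `c = conj a / a` turns `a ^ 2` into `‖a‖ ^ 2` and `a x` into `conj a * x`,
whose real part is that of `a x`. -/
lemma posRealGap_sq_sub_le (a K : ℂ) (x : ℝ) {Δ : ℝ} (hΔ : 0 ≤ Δ) :
    posRealGap (a ^ 2) - 4 * ‖K‖ ≤ posRealGap (a ^ 2 - Δ + 2 * (a * x + K)) := by
  set c : ℂ := conj a / a
  set z := a ^ 2 - Δ + 2 * (a * x + K)
  have hca : c * a = conj a := div_mul_cancel_of_imp fun h => by simp [h]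
  have hc : ‖c‖ ≤ 1 := by
    rw [norm_div, Complex.norm_conj]; exact div_self_le_one _
  have hgap : ((c - 1) * z).re ≤ posRealGap z := by
    rw [posRealGap, sub_mul, one_mul, Complex.sub_re, sub_le_sub_iff_right]
    exact (Complex.re_le_norm _).trans
      (by rw [norm_mul]; exact mul_le_of_le_one_left (norm_nonneg _) hc)
  have hrot : (c - 1) * z
      = (conj a * a - a ^ 2) + Δ * (1 - c) + 2 * x * (conj a - a) + 2 * ((c - 1) * K) := by
    linear_combination (a + 2 * x) * hca
  have hK : -(2 * ‖K‖) ≤ ((c - 1) * K).re :=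
    calc -(2 * ‖K‖) ≤ -(‖c - 1‖ * ‖K‖) := by
          gcongr; exact (norm_sub_le c 1).trans (by rw [norm_one]; linarith)
      _ = -‖(c - 1) * K‖ := by rw [norm_mul]
      _ ≤ ((c - 1) * K).re := neg_le_of_abs_le (Complex.abs_re_le_norm _)
  have hcre : c.re ≤ 1 := (Complex.re_le_norm c).trans hc
  have hre : ((c - 1) * z).re = posRealGap (a ^ 2) + Δ * (1 - c.re) + 2 * ((c - 1) * K).re := by
    rw [hrot, Complex.conj_mul', posRealGap, norm_pow]
    simp [Complex.mul_re, ← Complex.ofReal_pow]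
  linarith [mul_nonneg hΔ (sub_nonneg.2 hcre)]

lemma posRealGap_sq_sub_le_integral {α : Type*} [MeasurableSpace α] {μ : Measure α}
    {B : α → ℂ} {g : α → ℝ} {a : ℂ} {Δ ε : ℝ} (hΔ : 0 ≤ Δ)
    (hBg : Integrable (fun r => B r * g r) μ) (hg : Integrable g μ)
    (hB : ∀ᵐ r ∂μ, ‖B r - a‖ ≤ ε) :
    posRealGap (a ^ 2) - 4 * (ε * ∫ r, |g r| ∂μ)
      ≤ posRealGap (a ^ 2 - Δ + 2 * ∫ r, B r * g r ∂μ) := by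
  have hag : Integrable (fun r => a * g r) μ := hg.ofReal.const_mul a
  have hsplit : ∫ r, B r * g r ∂μ = a * ↑(∫ r, g r ∂μ) + ∫ r, (B r - a) * g r ∂μ := by
    simp_rw [sub_mul]
    rw [integral_sub hBg hag, integral_const_mul, integral_complex_ofReal]
    ring
  have hK : ‖∫ r, (B r - a) * g r ∂μ‖ ≤ ε * ∫ r, |g r| ∂μ := by
    rw [← integral_const_mul]
    refine norm_integral_le_of_norm_le (hg.abs.const_mul ε) (hB.mono fun r hr => ?_)
    rw [norm_mul, Complex.norm_real, Real.norm_eq_abs]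
    exact mul_le_mul_of_nonneg_right hr (abs_nonneg _)
  rw [hsplit]
  linarith [posRealGap_sq_sub_le a (∫ r, (B r - a) * g r ∂μ) (∫ r, g r ∂μ) hΔ]

lemma monotoneOn_Icc_of_eventually_le {F : ℝ → ℝ} {a b : ℝ} (hF : ContinuousOn F (Icc a b))
    (hloc : ∀ x ∈ Ico a b, ∀ᶠ y in 𝓝[>] x, F x ≤ F y) : MonotoneOn F (Icc a b) := by
  intro s hs t ht hst
  have hclosed : IsClosed ({y | F s ≤ F y} ∩ Icc s t) := by
    rw [inter_comm]
    exact (hF.mono (Icc_subset_Icc hs.1 ht.2)).preimage_isClosed_of_isClosed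
      isClosed_Icc isClosed_Ici
  refine hclosed.Icc_subset_of_forall_exists_gt (le_refl (F s)) ?_ ⟨hst, le_rfl⟩
  rintro x ⟨hsx, hx⟩ y hxy
  obtain ⟨z, hxz, hz⟩ := ((hloc x ⟨hs.1.trans hx.1, hx.2.trans_le ht.2⟩).and
    (Ioc_mem_nhdsGT hxy)).exists
  exact ⟨z, le_trans hsx hxz, hz⟩

lemma monotoneOn_of_forall_pos_monotoneOn_add_mul {f G : ℝ → ℝ} {s : Set ℝ}
    (h : ∀ ε > 0, MonotoneOn (fun x => f x + ε * G x) s) : MonotoneOn f s := by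
  intro x hx y hy hxy
  have hlim : ∀ z, Tendsto (fun ε => f z + ε * G z) (𝓝[>] 0) (𝓝 (f z)) := fun z => by
    simpa using ((continuous_const.add (continuous_id.mul continuous_const)).tendsto
      (0 : ℝ)).mono_left nhdsWithin_le_nhds (f := fun ε : ℝ => f z + ε * G z)
  exact le_of_tendsto_of_tendsto (hlim x) (hlim y)
    (eventually_nhdsWithin_of_forall fun ε hε => h ε hε hx hy hxy)

lemma exists_setIntegral_Ioc_lt {f : ℝ → ℝ} {b c : ℝ} (hb : 0 < b)
    (hf : IntegrableOn f (Ioc 0 b)) (hc : 0 < c) : ∃ t ∈ Ioc 0 b, ∫ r in Ioc 0 t, f r < c := by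
  have hcont : ContinuousWithinAt (fun u => ∫ r in (0)..u, f r) (Icc 0 b) 0 := by
    have := intervalIntegral.continuousOn_primitive_interval'
      ((intervalIntegrable_iff_integrableOn_Ioc_of_le hb.le).2 hf) left_mem_uIcc
    rw [uIcc_of_le hb.le] at this
    exact this 0 (left_mem_Icc.2 hb.le)
  have hlim : Tendsto (fun u => ∫ r in (0)..u, f r) (𝓝[>] 0) (𝓝 0) := by
    simpa using hcont.tendsto.mono_left (nhdsWithin_le_of_mem (Icc_mem_nhdsGT hb))
  obtain ⟨t, hlt, ht⟩ := ((hlim.eventually (gt_mem_nhds hc)).and (Ioc_mem_nhdsGT hb)).exists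
  exact ⟨t, ht, by rwa [intervalIntegral.integral_of_le ht.1.le] at hlt⟩

/-- Weighted AM-GM `2 α g ≤ α² / (2t) + 2t g²` gives `α(u)² ≤ K - u` on `(0, t]` with
`K = ∫ α² / (2t) + 2t ∫ g²`; integrating, `∫ α² ≤ 4 t² ∫ g²`, so `α(t)² ≤ t (4 ∫ g² - 1) < 0`. -/
lemma false_of_sq_eq_neg_add_integral {α g : ℝ → ℝ} {t : ℝ} (ht : 0 < t)
    (hα : IntegrableOn (fun r => α r ^ 2) (Ioc 0 t))
    (hg : IntegrableOn (fun r => g r ^ 2) (Ioc 0 t))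
    (hαg : IntegrableOn (fun r => α r * g r) (Ioc 0 t))
    (hsmall : 4 * ∫ r in Ioc 0 t, g r ^ 2 < 1)
    (h : ∀ u ∈ Ioc 0 t, α u ^ 2 = -u + 2 * ∫ r in Ioc 0 u, α r * g r) : False := by
  set F := ∫ r in Ioc 0 t, α r ^ 2
  set c := ∫ r in Ioc 0 t, g r ^ 2
  set K := F / (2 * t) + 2 * t * c
  have hbound : IntegrableOn (fun r => α r ^ 2 / (2 * t) + 2 * t * g r ^ 2) (Ioc 0 t) :=
    (hα.div_const _).add (hg.const_mul _)
  have hK : ∀ u ∈ Ioc 0 t, α u ^ 2 ≤ -u + K := by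
    intro u hu
    have hsub : Ioc 0 u ⊆ Ioc 0 t := Ioc_subset_Ioc_right hu.2
    have hamgm : ∀ r ∈ Ioc 0 u, 2 * (α r * g r) ≤ α r ^ 2 / (2 * t) + 2 * t * g r ^ 2 := by
      intro r _
      rw [div_add' _ _ _ (by positivity), le_div_iff₀ (by positivity)]
      nlinarith [sq_nonneg (α r - 2 * t * g r)]
    have hint : 2 * ∫ r in Ioc 0 u, α r * g r ≤ K :=
      calc 2 * ∫ r in Ioc 0 u, α r * g r = ∫ r in Ioc 0 u, 2 * (α r * g r) :=
            (integral_const_mul 2 _).symm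
        _ ≤ ∫ r in Ioc 0 u, (α r ^ 2 / (2 * t) + 2 * t * g r ^ 2) :=
            setIntegral_mono_on ((hαg.mono_set hsub).const_mul 2) (hbound.mono_set hsub)
              measurableSet_Ioc hamgm
        _ ≤ ∫ r in Ioc 0 t, (α r ^ 2 / (2 * t) + 2 * t * g r ^ 2) :=
            setIntegral_mono_set hbound (Eventually.of_forall fun r => by positivity)
              hsub.eventuallyLE
        _ = K := by
            rw [integral_add (hα.div_const _) (hg.const_mul _), integral_div, integral_const_mul]
    linarith [h u hu]
  have hFK : F ≤ K * t :=
    calc F ≤ ∫ _ in Ioc 0 t, K :=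
          setIntegral_mono_on hα (integrableOn_const measure_Ioc_lt_top.ne) measurableSet_Ioc
            fun u hu => by linarith [hK u hu, hu.1]
      _ = K * t := by
          rw [setIntegral_const, smul_eq_mul, Real.volume_real_Ioc_of_le ht.le, sub_zero, mul_comm]
  have hF : F / (2 * t) ≤ 2 * t * c := by
    rw [div_le_iff₀ (by positivity)]
    have : F / (2 * t) * t = F / 2 := by field_simp
    nlinarith
  nlinarith [hK t ⟨ht, le_rfl⟩, sq_nonneg (α t), mul_lt_mul_of_pos_left hsmall ht]

lemma not_forall_sq_eq_neg_add_integral {α g : ℝ → ℝ} {b : ℝ} (hb : 0 < b)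
    (hα : IntegrableOn (fun r => α r ^ 2) (Ioc 0 b))
    (hg : IntegrableOn (fun r => g r ^ 2) (Ioc 0 b))
    (hαg : IntegrableOn (fun r => α r * g r) (Ioc 0 b)) :
    ¬ ∀ u ∈ Ioc 0 b, α u ^ 2 = -u + 2 * ∫ r in Ioc 0 u, α r * g r := by
  intro h
  obtain ⟨t, ht, hsmall⟩ := exists_setIntegral_Ioc_lt hb hg (by norm_num : (0 : ℝ) < 1 / 4)
  have hsub : Ioc 0 t ⊆ Ioc 0 b := Ioc_subset_Ioc_right ht.2
  exact false_of_sq_eq_neg_add_integral ht.1 (hα.mono_set hsub) (hg.mono_set hsub)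
    (hαg.mono_set hsub) (by linarith) fun u hu => h u (hsub hu)

lemma integrable_re_mul_ofReal {α : Type*} [MeasurableSpace α] {μ : Measure α}
    {B : α → ℂ} {g : α → ℝ} (h : Integrable (fun r => B r * g r) μ) :
    Integrable (fun r => (B r).re * g r) μ := by
  simpa only [RCLike.re_to_complex, Complex.re_mul_ofReal] using h.re

lemma integral_re_mul_ofReal {α : Type*} [MeasurableSpace α] {μ : Measure α}
    {B : α → ℂ} {g : α → ℝ} (h : Integrable (fun r => B r * g r) μ) :
    ∫ r, (B r).re * g r ∂μ = (∫ r, B r * g r ∂μ).re := by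
  simpa only [RCLike.re_to_complex, Complex.re_mul_ofReal] using integral_re h

section Solution

variable {T : ℝ} {φ A : ℝ → ℂ} {g : ℝ → ℝ}

lemma exists_ae_norm_le_of_sq_eq (hφ : ContinuousOn φ (Icc 0 T))
    (hA : ∀ t ∈ Icc 0 T, A t ^ 2 = φ t ∧ 0 ≤ (A t).im) :
    ∃ C, ∀ᵐ t ∂(volume.restrict (Ioc 0 T)), ‖A t‖ ≤ C := by
  obtain ⟨M, hM⟩ := isCompact_Icc.exists_bound_of_continuousOn hφ
  refine ⟨√M, (ae_restrict_mem measurableSet_Ioc).mono fun t ht => Real.le_sqrt_of_sq_le ?_⟩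
  rw [← norm_pow, (hA t (Ioc_subset_Icc_self ht)).1]
  exact hM t (Ioc_subset_Icc_self ht)

lemma integrableOn_mul_of_sq_eq (hφ : ContinuousOn φ (Icc 0 T))
    (hA : ∀ t ∈ Icc 0 T, A t ^ 2 = φ t ∧ 0 ≤ (A t).im) (hAm : Measurable A)
    (hg : IntegrableOn g (Ioc 0 T)) : IntegrableOn (fun s => A s * g s) (Ioc 0 T) :=
  hg.ofReal.bdd_mul hAm.aestronglyMeasurable (exists_ae_norm_le_of_sq_eq hφ hA).choose_spec

lemma integrableOn_re_sq_of_sq_eq (hφ : ContinuousOn φ (Icc 0 T))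
    (hA : ∀ t ∈ Icc 0 T, A t ^ 2 = φ t ∧ 0 ≤ (A t).im) (hAm : Measurable A) :
    IntegrableOn (fun s => (A s).re ^ 2) (Ioc 0 T) := by
  obtain ⟨C, hC⟩ := exists_ae_norm_le_of_sq_eq hφ hA
  refine Integrable.of_bound ((Complex.measurable_re.comp hAm).pow_const 2).aestronglyMeasurable
    (C ^ 2) (hC.mono fun s hs => ?_)
  rw [norm_pow, Real.norm_eq_abs]
  exact pow_le_pow_left₀ (abs_nonneg _) ((Complex.abs_re_le_norm _).trans hs) 2

lemma eq_sub_add_integral_Ioc (hAg : IntegrableOn (fun s => A s * g s) (Ioc 0 T))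
    (heq : ∀ t ∈ Icc 0 T, φ t = -(t : ℂ) + 2 * ∫ s in Ioc 0 t, A s * g s)
    {σ τ : ℝ} (hσ : 0 ≤ σ) (hστ : σ ≤ τ) (hτ : τ ≤ T) :
    φ τ = φ σ - ((τ - σ : ℝ) : ℂ) + 2 * ∫ s in Ioc σ τ, A s * g s := by
  rw [heq τ ⟨hσ.trans hστ, hτ⟩, heq σ ⟨hσ, hστ.trans hτ⟩, ← Ioc_union_Ioc_eq_Ioc hσ hστ,
    setIntegral_union (Ioc_disjoint_Ioc_of_le le_rfl) measurableSet_Ioc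
      (hAg.mono_set (Ioc_subset_Ioc_right (hστ.trans hτ)))
      (hAg.mono_set (Ioc_subset_Ioc hσ hτ))]
  push_cast
  ring

lemma re_eq_neg_add_integral_Ioc (hAg : IntegrableOn (fun s => A s * g s) (Ioc 0 T))
    (heq : ∀ t ∈ Icc 0 T, φ t = -(t : ℂ) + 2 * ∫ s in Ioc 0 t, A s * g s)
    {t : ℝ} (ht : t ∈ Icc 0 T) :
    (φ t).re = -t + 2 * ∫ s in Ioc 0 t, (A s).re * g s := by
  rw [heq t ht, integral_re_mul_ofReal (hAg.mono_set (Ioc_subset_Ioc_right ht.2))]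
  simp

lemma continuousWithinAt_of_offPosReal (hφ : ContinuousOn φ (Icc 0 T))
    (hA : ∀ t ∈ Icc 0 T, A t ^ 2 = φ t ∧ 0 ≤ (A t).im) {x : ℝ} (hx : x ∈ Icc 0 T)
    (hoff : offPosReal (φ x)) : ContinuousWithinAt A (Icc 0 T) x := by
  have hoff_near : ∀ᶠ r in 𝓝[Icc 0 T] x, offPosReal (φ r) :=
    hφ x hx (isOpen_setOf_offPosReal.mem_nhds hoff)
  refine ((continuousAt_upSqrt hoff).comp_continuousWithinAt (hφ x hx)).congr_of_eventuallyEq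
    ?_ (eq_upSqrt_of_sq_eq hoff (hA x hx).1 (hA x hx).2)
  filter_upwards [hoff_near, self_mem_nhdsWithin] with r hr hrI
  exact eq_upSqrt_of_sq_eq hr (hA r hrI).1 (hA r hrI).2

lemma eventually_posRealGap_sub_le (hφ : ContinuousOn φ (Icc 0 T))
    (hA : ∀ t ∈ Icc 0 T, A t ^ 2 = φ t ∧ 0 ≤ (A t).im) (hg : IntegrableOn g (Ioc 0 T))
    (hAg : IntegrableOn (fun s => A s * g s) (Ioc 0 T))
    (heq : ∀ t ∈ Icc 0 T, φ t = -(t : ℂ) + 2 * ∫ s in Ioc 0 t, A s * g s)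
    {ε : ℝ} (hε : 0 < ε) {x : ℝ} (hx : x ∈ Ico 0 T) :
    ∀ᶠ y in 𝓝[>] x, posRealGap (φ x) - 4 * (ε * ∫ r in Ioc x y, |g r|) ≤ posRealGap (φ y) := by
  by_cases hoff : offPosReal (φ x)
  · obtain ⟨δ, hδ, hclose⟩ := Metric.continuousWithinAt_iff.1
      (continuousWithinAt_of_offPosReal hφ hA (Ico_subset_Icc_self hx) hoff) ε hε
    filter_upwards [Ioo_mem_nhdsGT (lt_min (lt_add_of_pos_right x hδ) hx.2)] with y hy
    have hyT : y ≤ T := hy.2.le.trans (min_le_right _ _)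
    have hsub : Ioc x y ⊆ Ioc 0 T := Ioc_subset_Ioc hx.1 hyT
    have hB : ∀ᵐ r ∂(volume.restrict (Ioc x y)), ‖A r - A x‖ ≤ ε := by
      refine (ae_restrict_mem measurableSet_Ioc).mono fun r hr => ?_
      rw [← dist_eq_norm]
      refine (hclose (Ioc_subset_Icc_self (hsub hr)) ?_).le
      rw [Real.dist_eq, abs_of_pos (sub_pos.2 hr.1)]
      linarith [hr.2, hy.2.trans_le (min_le_left _ _)]
    rw [eq_sub_add_integral_Ioc hAg heq hx.1 hy.1.le hyT, ← (hA x (Ico_subset_Icc_self hx)).1]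
    exact posRealGap_sq_sub_le_integral (sub_nonneg.2 hy.1.le) (hAg.mono_set hsub)
      (hg.mono_set hsub) hB
  · have hzero : posRealGap (φ x) ≤ 0 := not_lt.1 (mt posRealGap_pos_iff.1 hoff)
    refine Eventually.of_forall fun y => ?_
    have : 0 ≤ ε * ∫ r in Ioc x y, |g r| :=
      mul_nonneg hε.le (integral_nonneg fun r => abs_nonneg (g r))
    linarith [posRealGap_nonneg (φ y)]

lemma monotoneOn_posRealGap (hT : 0 ≤ T) (hφ : ContinuousOn φ (Icc 0 T))
    (hA : ∀ t ∈ Icc 0 T, A t ^ 2 = φ t ∧ 0 ≤ (A t).im) (hg : IntegrableOn g (Ioc 0 T))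
    (hAg : IntegrableOn (fun s => A s * g s) (Ioc 0 T))
    (heq : ∀ t ∈ Icc 0 T, φ t = -(t : ℂ) + 2 * ∫ s in Ioc 0 t, A s * g s) :
    MonotoneOn (fun t => posRealGap (φ t)) (Icc 0 T) := by
  have hgi : IntervalIntegrable (fun r => |g r|) volume 0 T :=
    (intervalIntegrable_iff_integrableOn_Ioc_of_le hT).2 hg.abs
  refine monotoneOn_of_forall_pos_monotoneOn_add_mul
    (G := fun y => 4 * ∫ r in (0)..y, |g r|) fun ε hε => monotoneOn_Icc_of_eventually_le ?_ ?_
  · have hG := intervalIntegral.continuousOn_primitive_interval' hgi left_mem_uIcc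
    rw [uIcc_of_le hT] at hG
    exact (continuous_posRealGap.comp_continuousOn hφ).add
      (continuousOn_const.mul (continuousOn_const.mul hG))
  · intro x hx
    filter_upwards [eventually_posRealGap_sub_le hφ hA hg hAg heq hε hx,
      Ioc_mem_nhdsGT hx.2] with y hgap hy
    have hadd : ∫ r in (0)..y, |g r| = (∫ r in (0)..x, |g r|) + ∫ r in Ioc x y, |g r| := by
      rw [← intervalIntegral.integral_of_le hy.1.le,
        intervalIntegral.integral_add_adjacent_intervals
          (hgi.mono_set (by
            rw [uIcc_of_le hx.1, uIcc_of_le hT]; exact Icc_subset_Icc_right hx.2.le))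
          (hgi.mono_set (by
            rw [uIcc_of_le hy.1.le, uIcc_of_le hT]; exact Icc_subset_Icc hx.1 hy.2))]
    simp only [hadd]
    linarith

lemma re_sq_eq_of_not_offPosReal (hT : 0 ≤ T) (hφ : ContinuousOn φ (Icc 0 T))
    (hA : ∀ t ∈ Icc 0 T, A t ^ 2 = φ t ∧ 0 ≤ (A t).im) (hg : IntegrableOn g (Ioc 0 T))
    (hAg : IntegrableOn (fun s => A s * g s) (Ioc 0 T))
    (heq : ∀ t ∈ Icc 0 T, φ t = -(t : ℂ) + 2 * ∫ s in Ioc 0 t, A s * g s)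
    {t : ℝ} (ht : t ∈ Icc 0 T) (hnot : ¬ offPosReal (φ t)) :
    ∀ u ∈ Ioc 0 t, (A u).re ^ 2 = -u + 2 * ∫ s in Ioc 0 u, (A s).re * g s := by
  intro u hu
  have huI : u ∈ Icc 0 T := ⟨hu.1.le, hu.2.trans ht.2⟩
  have him : (A u).im = 0 := by
    have hgap : posRealGap (A u ^ 2) ≤ 0 := (hA u huI).1 ▸
      (monotoneOn_posRealGap hT hφ hA hg hAg heq huI ht hu.2).trans
        (not_lt.1 (mt posRealGap_pos_iff.1 hnot))
    rw [posRealGap_sq] at hgap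
    nlinarith [sq_nonneg (A u).im]
  rw [← re_eq_neg_add_integral_Ioc hAg heq huI, ← (hA u huI).1]
  simp [sq, him]

end Solution

theorem stmt0_general (T : ℝ) (hT : 0 < T) (h : CM T) (φ A : ℝ → ℂ)
    (hφc : ContinuousOn φ (Set.Icc 0 T))
    (hAmeas : Measurable A)
    (hAsq : ∀ t ∈ Set.Icc 0 T, A t ^ 2 = φ t ∧ 0 ≤ (A t).im)
    (heq : ∀ t ∈ Set.Icc 0 T,
      φ t = -(t : ℂ) + 2 * ∫ s in Set.Ioc 0 t, A s * ((h.dFun s : ℝ) : ℂ)) :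
    ∀ t ∈ Set.Ioc 0 T, offPosReal (φ t) ∧ A t = upSqrt (φ t) := by
  have hg : IntegrableOn h.dFun (Ioc 0 T) := h.memL2.integrable one_le_two
  have hAg := integrableOn_mul_of_sq_eq hφc hAsq hAmeas hg
  intro t ht
  have htI : t ∈ Icc 0 T := Ioc_subset_Icc_self ht
  have hoff : offPosReal (φ t) := by
    by_contra hnot
    have hsub : Ioc 0 t ⊆ Ioc 0 T := Ioc_subset_Ioc_right ht.2
    exact not_forall_sq_eq_neg_add_integral ht.1
      ((integrableOn_re_sq_of_sq_eq hφc hAsq hAmeas).mono_set hsub)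
      (IntegrableOn.mono_set h.memL2.integrable_sq hsub)
      (IntegrableOn.mono_set (integrable_re_mul_ofReal hAg) hsub)
      (re_sq_eq_of_not_offPosReal hT.le hφc hAsq hg hAg heq htI hnot)
  exact ⟨hoff, eq_upSqrt_of_sq_eq hoff (hAsq t htI).1 (hAsq t htI).2⟩

/-- Any solution of `φ t = -t + 2∫₀ᵗ A h'` with `A` an adapted/measurable
branch square root of `φ` satisfies `φ t ∈ ℂ \ [0,∞)` for all `t ∈ (0,T]`, and hence
`A t = √(φ t)` there. -/
theorem stmt0 (T : ℝ) (hT : 0 < T) (h : CM T) (φ A : ℝ → ℂ)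
    (hφc : ContinuousOn φ (Set.Icc 0 T)) (hφ0 : φ 0 = 0)
    (hAmeas : Measurable A)
    (hAsq : ∀ t ∈ Set.Icc 0 T, A t ^ 2 = φ t ∧ 0 ≤ (A t).im)
    (heq : ∀ t ∈ Set.Icc 0 T,
      φ t = -(t : ℂ) + 2 * ∫ s in Set.Ioc 0 t, A s * ((h.dFun s : ℝ) : ℂ)) :
    ∀ t ∈ Set.Ioc 0 T, offPosReal (φ t) ∧ A t = upSqrt (φ t) :=
  stmt0_general T hT h φ A hφc hAmeas hAsq heq
end

section
/- Let T > 0 and φ ∈ C₀([0,T],ℂ). Then I(φ) < ∞ if and only if there exists h ∈ H¹₀([0,T],ℝ) with φ = φ^h; moreover, in that case I(φ) = (1/2)∫₀^T h'(r)² dr. -/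
open MeasureTheory Set Filter

/-! Condition (H3) says precisely that `h' := (φ' + 1) / (2√φ)` is a real
`L²` function, and solving for `φ'` gives `φ' = -1 + 2√φ h'`, i.e. `φ = φ^h`. Conversely
`φ^h` has the density `-1 + 2√φ h'`, and since the density of `φ` is a.e. unique
(Lebesgue differentiation), every admissible density yields the same value `½∫h'²`. -/

open Topology

section AEUniqueDensity

variable {E : Type*} [NormedAddCommGroup E] [NormedSpace ℝ E] [CompleteSpace E]

theorem ae_eq_of_forall_setIntegral_Ioc_eq {f g : ℝ → E} {a b : ℝ}
    (hf : IntegrableOn f (Ioc a b)) (hg : IntegrableOn g (Ioc a b))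
    (hfg : ∀ t ∈ Icc a b, ∫ s in Ioc a t, f s = ∫ s in Ioc a t, g s) :
    f =ᵐ[volume.restrict (Ioc a b)] g := by
  rcases lt_or_ge b a with hba | hab
  · simp only [Ioc_eq_empty_of_le hba.le, Measure.restrict_empty, ae_zero]
    exact eventually_bot
  have hf' := (intervalIntegrable_iff_integrableOn_Ioc_of_le hab).mpr hf
  have hg' := (intervalIntegrable_iff_integrableOn_Ioc_of_le hab).mpr hg
  rw [Measure.restrict_congr_set Ioo_ae_eq_Ioc.symm]
  filter_upwards [ae_restrict_of_ae hf'.ae_hasDerivAt_integral,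
    ae_restrict_of_ae hg'.ae_hasDerivAt_integral, ae_restrict_mem measurableSet_Ioo]
    with x hfx hgx hx
  have hmem : x ∈ uIcc a b := by rw [uIcc_of_le hab]; exact Ioo_subset_Icc_self hx
  have ha : a ∈ uIcc a b := left_mem_uIcc
  have hprim : (fun y => ∫ s in a..y, f s) =ᶠ[𝓝 x] fun y => ∫ s in a..y, g s := by
    filter_upwards [Ioo_mem_nhds hx.1 hx.2] with y hy
    rw [intervalIntegral.integral_of_le hy.1.le, intervalIntegral.integral_of_le hy.1.le,
      hfg y (Ioo_subset_Icc_self hy)]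
  exact (hfx hmem a ha).unique ((hgx hmem a ha).congr_of_eventuallyEq hprim)

end AEUniqueDensity

theorem IsDensityOn.ae_eq {T : ℝ} {φ d₁ d₂ : ℝ → ℂ} (h₁ : IsDensityOn T φ d₁)
    (h₂ : IsDensityOn T φ d₂) : d₁ =ᵐ[volume.restrict (Ioc 0 T)] d₂ :=
  ae_eq_of_forall_setIntegral_Ioc_eq h₁.1 h₂.1 fun t ht => (h₁.2 t ht).symm.trans (h₂.2 t ht)

theorem offPosReal.ne_zero {z : ℂ} (hz : offPosReal z) : z ≠ 0 := by
  rintro rfl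
  exact hz ⟨rfl, le_rfl⟩

theorem upSqrt_ne_zero {z : ℂ} (hz : offPosReal z) : upSqrt z ≠ 0 := by
  rw [upSqrt, if_neg hz]
  exact mul_ne_zero Complex.I_ne_zero
    ((Complex.cpow_ne_zero_iff_of_exponent_ne_zero (by norm_num)).mpr
      (neg_ne_zero.mpr hz.ne_zero))

theorem measurable_upSqrt : Measurable upSqrt :=
  Measurable.ite ((Complex.measurable_im (measurableSet_singleton 0)).inter
      (Complex.measurable_re measurableSet_Ici))
    (Complex.measurable_ofReal.comp (Real.continuous_sqrt.measurable.comp Complex.measurable_re))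
    (measurable_const.mul (measurable_neg.pow_const _))

theorem norm_upSqrt_le (z : ℂ) : ‖upSqrt z‖ ≤ √‖z‖ := by
  rw [upSqrt]
  split_ifs with hz
  · rw [Complex.norm_real, Real.norm_of_nonneg (Real.sqrt_nonneg _)]
    exact Real.sqrt_le_sqrt (Complex.re_le_norm z)
  · have hz' : -z ≠ 0 := neg_ne_zero.mpr (offPosReal.ne_zero hz)
    rw [norm_mul, Complex.norm_I, one_mul, Complex.norm_cpow_of_ne_zero hz', norm_neg,
      Real.sqrt_eq_rpow]
    norm_num

theorem integrableOn_upSqrt_mul_ofReal {T t : ℝ} {φ : ℝ → ℂ} (hφc : ContinuousOn φ (Icc 0 T))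
    {g : ℝ → ℝ} (hg : MemLp g 2 (volume.restrict (Ioc 0 T))) (ht : t ≤ T) :
    IntegrableOn (fun s => upSqrt (φ s) * (g s : ℂ)) (Ioc 0 t) := by
  have hsub : Ioc 0 t ⊆ Icc 0 T := fun s hs => ⟨hs.1.le, hs.2.trans ht⟩
  obtain ⟨M, hM⟩ := isCompact_Icc.exists_bound_of_continuousOn hφc
  have hgt : MemLp g 2 (volume.restrict (Ioc 0 t)) :=
    hg.mono_measure (Measure.restrict_mono (Ioc_subset_Ioc le_rfl ht) le_rfl)
  refine Integrable.bdd_mul (c := √M) (hgt.integrable one_le_two).ofReal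
    (measurable_upSqrt.comp_aemeasurable
      ((hφc.mono hsub).aemeasurable measurableSet_Ioc)).aestronglyMeasurable ?_
  filter_upwards [ae_restrict_mem measurableSet_Ioc] with s hs
  exact (norm_upSqrt_le _).trans (Real.sqrt_le_sqrt (hM s (hsub hs)))

theorem isDensityOn_neg_add_two_mul_integral {T : ℝ} {F : ℝ → ℂ}
    (hF : IntegrableOn F (Ioc 0 T)) :
    IsDensityOn T (fun t => -(t : ℂ) + 2 * ∫ s in Ioc 0 t, F s) (fun s => -1 + 2 * F s) := by
  have hconst (t : ℝ) : IntegrableOn (fun _ => (-1 : ℂ)) (Ioc 0 t) :=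
    integrableOn_const measure_Ioc_lt_top.ne
  refine ⟨(hconst T).add (hF.const_mul 2), fun t ht => ?_⟩
  have hFt : IntegrableOn F (Ioc 0 t) := hF.mono_set (Ioc_subset_Ioc le_rfl ht.2)
  dsimp only
  rw [integral_add (hconst t) (hFt.const_mul 2),
    integral_const_mul, setIntegral_const, Real.volume_real_Ioc_of_le ht.1]
  simp

/-- The paper's `(φ' + 1) / (2√φ)` for a density `d = φ'`; it is `h'` when `φ = φ^h`. -/
noncomputable def cmDensity (φ d : ℝ → ℂ) (t : ℝ) : ℂ :=
  (d t + 1) / (2 * upSqrt (φ t))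

theorem eq_neg_one_add_two_mul_iff_cmDensity_eq {φ d : ℝ → ℂ} {t : ℝ} (ht : offPosReal (φ t))
    (g : ℂ) : d t = -1 + 2 * (upSqrt (φ t) * g) ↔ cmDensity φ d t = g := by
  rw [cmDensity, div_eq_iff (mul_ne_zero two_ne_zero (upSqrt_ne_zero ht))]
  constructor <;> intro h <;> linear_combination h

def IsAdmissibleDensity (T : ℝ) (φ d : ℝ → ℂ) : Prop :=
  IsDensityOn T φ d ∧ (∀ t ∈ Ioc 0 T, offPosReal (φ t)) ∧
    (∀ᵐ t ∂volume.restrict (Ioc 0 T), (cmDensity φ d t).im = 0) ∧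
    MemLp (fun t => (cmDensity φ d t).re) 2 (volume.restrict (Ioc 0 T))

theorem rateI_eq_iInf_isAdmissibleDensity (T : ℝ) (φ : ℝ → ℂ) :
    rateI T φ = ⨅ (d : ℝ → ℂ) (_ : IsAdmissibleDensity T φ d),
      ∫⁻ t in Ioc 0 T, ENNReal.ofReal ((cmDensity φ d t).re ^ 2 / 2) :=
  rfl

namespace IsPhiH

variable {T : ℝ} {h : CM T} {φ : ℝ → ℂ}

theorem isAdmissibleDensity (hφ : IsPhiH T h φ) :
    IsAdmissibleDensity T φ fun s => -1 + 2 * (upSqrt (φ s) * (h.dFun s : ℂ)) := by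
  obtain ⟨hφc, -, hoff, hφeq⟩ := hφ
  have hcm : ∀ᵐ t ∂volume.restrict (Ioc 0 T),
      cmDensity φ (fun s => -1 + 2 * (upSqrt (φ s) * (h.dFun s : ℂ))) t = h.dFun t := by
    filter_upwards [ae_restrict_mem measurableSet_Ioc] with t ht
    exact (eq_neg_one_add_two_mul_iff_cmDensity_eq (hoff t ht) _).mp rfl
  have hdens := isDensityOn_neg_add_two_mul_integral
    (integrableOn_upSqrt_mul_ofReal hφc h.memL2 le_rfl)
  refine ⟨⟨hdens.1, fun t ht => (hφeq t ht).trans (hdens.2 t ht)⟩, hoff, ?_, ?_⟩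
  · filter_upwards [hcm] with t ht
    rw [ht, Complex.ofReal_im]
  · refine h.memL2.ae_eq ?_
    filter_upwards [hcm] with t ht
    rw [ht, Complex.ofReal_re]

theorem lintegral_cmDensity_eq (hφ : IsPhiH T h φ) {d : ℝ → ℂ}
    (hd : IsAdmissibleDensity T φ d) :
    ∫⁻ t in Ioc 0 T, ENNReal.ofReal ((cmDensity φ d t).re ^ 2 / 2) =
      ENNReal.ofReal ((1 / 2) * ∫ r in Ioc 0 T, (h.dFun r) ^ 2) := by
  have hcm : ∀ᵐ t ∂volume.restrict (Ioc 0 T), (cmDensity φ d t).re = h.dFun t := by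
    filter_upwards [hd.1.ae_eq hφ.isAdmissibleDensity.1, ae_restrict_mem measurableSet_Ioc]
      with t hdt ht
    rw [(eq_neg_one_add_two_mul_iff_cmDensity_eq (hφ.2.2.1 t ht) _).mp hdt, Complex.ofReal_re]
  rw [lintegral_congr_ae (hcm.mono fun t ht => by rw [ht]),
    ← ofReal_integral_eq_lintegral_ofReal (h.memL2.integrable_sq.div_const 2)
      (ae_of_all _ fun t => by positivity), integral_div, one_div_mul_eq_div]

theorem rateI_eq (hφ : IsPhiH T h φ) :
    rateI T φ = ENNReal.ofReal ((1 / 2) * ∫ r in Ioc 0 T, (h.dFun r) ^ 2) := by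
  rw [rateI_eq_iInf_isAdmissibleDensity]
  exact le_antisymm ((iInf₂_le _ hφ.isAdmissibleDensity).trans_eq
      (hφ.lintegral_cmDensity_eq hφ.isAdmissibleDensity))
    (le_iInf₂ fun d hd => (hφ.lintegral_cmDensity_eq hd).ge)

end IsPhiH

theorem IsAdmissibleDensity.exists_isPhiH {T : ℝ} {φ d : ℝ → ℂ}
    (hφc : ContinuousOn φ (Icc 0 T)) (hφ0 : φ 0 = 0) (hd : IsAdmissibleDensity T φ d) :
    ∃ h : CM T, IsPhiH T h φ := by
  obtain ⟨⟨-, hφd⟩, hoff, him, hL2⟩ := hd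
  obtain ⟨g, hgm, hg⟩ := hL2.1
  have hgL2 : MemLp g 2 (volume.restrict (Ioc 0 T)) := hL2.ae_eq hg
  have hdg : ∀ᵐ s ∂volume.restrict (Ioc 0 T), d s = -1 + 2 * (upSqrt (φ s) * (g s : ℂ)) := by
    filter_upwards [him, hg, ae_restrict_mem measurableSet_Ioc] with s hs hsg hsT
    rw [eq_neg_one_add_two_mul_iff_cmDensity_eq (hoff s hsT)]
    exact Complex.ext (hsg.trans (Complex.ofReal_re _).symm)
      (hs.trans (Complex.ofReal_im _).symm)
  refine ⟨⟨fun t => ∫ s in Ioc 0 t, g s, g, hgm.measurable, hgL2,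
    fun _ _ => rfl⟩, hφc, hφ0, hoff, fun t ht => ?_⟩
  rw [hφd t ht, integral_congr_ae (ae_restrict_of_ae_restrict_of_subset
    (Ioc_subset_Ioc le_rfl ht.2) hdg)]
  exact (isDensityOn_neg_add_two_mul_integral
    (integrableOn_upSqrt_mul_ofReal hφc hgL2 le_rfl)).2 t ht |>.symm

theorem stmt5_general (T : ℝ) (φ : ℝ → ℂ)
    (hφc : ContinuousOn φ (Set.Icc 0 T)) (hφ0 : φ 0 = 0) :
    (rateI T φ < ⊤ ↔ ∃ h : CM T, IsPhiH T h φ) ∧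
    (∀ h : CM T, IsPhiH T h φ →
      rateI T φ = ENNReal.ofReal ((1 / 2) * ∫ r in Set.Ioc 0 T, (h.dFun r) ^ 2)) := by
  refine ⟨⟨fun hlt => ?_, fun ⟨h, hφ⟩ => hφ.rateI_eq ▸ ENNReal.ofReal_lt_top⟩,
    fun h hφ => hφ.rateI_eq⟩
  rw [rateI_eq_iInf_isAdmissibleDensity, iInf_lt_iff] at hlt
  obtain ⟨d, hd⟩ := hlt
  obtain ⟨hadm, -⟩ := iInf_lt_iff.mp hd
  exact hadm.exists_isPhiH hφc hφ0

/-- `I(φ) < ∞` iff `φ = φ^h` for some `h ∈ H¹₀([0,T],ℝ)`, in which case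
`I(φ) = ½ ∫₀ᵀ h'(r)² dr`. -/
theorem stmt5 (T : ℝ) (hT : 0 < T) (φ : ℝ → ℂ)
    (hφc : ContinuousOn φ (Set.Icc 0 T)) (hφ0 : φ 0 = 0) :
    (rateI T φ < ⊤ ↔ ∃ h : CM T, IsPhiH T h φ) ∧
    (∀ h : CM T, IsPhiH T h φ →
      rateI T φ = ENNReal.ofReal ((1 / 2) * ∫ r in Set.Ioc 0 T, (h.dFun r) ^ 2)) :=
  stmt5_general T φ hφc hφ0
end

section
/- Let T > 0 and let α, β: [0,T] → ℝ be continuous with α(0) = β(0) = 0 and β nonnegative. Assume that sup over f ∈ C¹([0,T],ℝ) of { f(T)α(T) − ∫₀^T α(r) f'(r) dr − (1/2)∫₀^T f(r)² β(r) dr } is finite. Then α is absolutely continuous and there exists a measurable function k: [0,T] → ℝ such that ∫₀^T k(r)² β(r) dr < ∞ and α'(t) = k(t)β(t) for Lebesgue-almost every t ∈ [0,T]. -/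
open MeasureTheory Set Filter

/-!
Let `μ` be the finite measure `β r dr` on `(0, T]`. Replacing `f` by `c • f` in the bounded
functional and optimising over `c` gives `(∫₀ᵀ f dα)² ≤ 2M ∫ f² dμ`, so `f ↦ ∫₀ᵀ f dα` factors
through a bounded functional on `L²(μ)` (Hahn–Banach), which by Riesz is integration against some
`k ∈ L²(μ)`. Testing against `C¹` ramps falling from `1` to `0` across `[t, t + ε]` and letting
`ε → 0` yields `α t` on the Stieltjes side, by continuity of `α`, and `∫₀ᵗ k β` on the `L²` side.
-/

open Topology

theorem sq_le_of_forall_mul_sub_le {a b M : ℝ} (hb : 0 ≤ b)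
    (h : ∀ c : ℝ, c * a - c ^ 2 / 2 * b ≤ M) : a ^ 2 ≤ 2 * M * b := by
  rcases hb.eq_or_lt with rfl | hb
  · by_contra! ha
    have := h ((M + 1) / a)
    rw [div_mul_cancel₀ _ (by rintro rfl; simp at ha)] at this
    linarith
  · have := h (a / b)
    field_simp at this
    nlinarith

theorem LinearMap.exists_continuousLinearMap_comp_eq {𝕜 E F : Type*} [RCLike 𝕜]
    [AddCommGroup E] [Module 𝕜 E] [NormedAddCommGroup F] [NormedSpace 𝕜 F]
    (P : E →ₗ[𝕜] F) (A : E →ₗ[𝕜] 𝕜) (C : ℝ) (h : ∀ x, ‖A x‖ ≤ C * ‖P x‖) :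
    ∃ Φ : F →L[𝕜] 𝕜, ∀ x, Φ (P x) = A x := by
  have hker : LinearMap.ker P ≤ LinearMap.ker A := fun x hx => by
    simpa [LinearMap.mem_ker.mp hx] using h x
  set g : LinearMap.range P →ₗ[𝕜] 𝕜 :=
    (LinearMap.ker P).liftQ A hker ∘ₗ (P.quotKerEquivRange.symm : LinearMap.range P →ₗ[𝕜] _)
  have hg : ∀ x, g ⟨P x, LinearMap.mem_range_self P x⟩ = A x := fun x => by
    have : P.quotKerEquivRange.symm ⟨P x, _⟩ = Submodule.Quotient.mk x :=
      P.quotKerEquivRange.symm_apply_eq.mpr rfl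
    simp [g, this]
  have hbound : ∀ y, ‖g y‖ ≤ C * ‖y‖ := by
    rintro ⟨_, x, rfl⟩
    simpa [hg] using h x
  obtain ⟨Φ, hΦ, -⟩ := exists_extension_norm_eq _ (g.mkContinuous C hbound)
  exact ⟨Φ, fun x => (hΦ _).trans (hg x)⟩

def contDiffSubmodule (𝕜 E F : Type*) [NontriviallyNormedField 𝕜] [NormedAddCommGroup E]
    [NormedSpace 𝕜 E] [NormedAddCommGroup F] [NormedSpace 𝕜 F] (n : WithTop ℕ∞) :
    Submodule 𝕜 (E → F) where
  carrier := {f | ContDiff 𝕜 n f}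
  add_mem' := ContDiff.add
  zero_mem' := contDiff_const
  smul_mem' c _ hf := hf.const_smul c

@[simp]
theorem mem_contDiffSubmodule {𝕜 E F : Type*} [NontriviallyNormedField 𝕜] [NormedAddCommGroup E]
    [NormedSpace 𝕜 E] [NormedAddCommGroup F] [NormedSpace 𝕜 F] {n : WithTop ℕ∞} {f : E → F} :
    f ∈ contDiffSubmodule 𝕜 E F n ↔ ContDiff 𝕜 n f :=
  Iff.rfl

section RSint

variable {T : ℝ} {f g a : ℝ → ℝ}

theorem integrableOn_mul_deriv (ha : ContinuousOn a (Icc 0 T)) (hf : ContDiff ℝ 1 f) :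
    IntegrableOn (fun r => a r * deriv f r) (Ioc 0 T) :=
  (ha.mul (hf.continuous_deriv le_rfl).continuousOn).integrableOn_Icc.mono_set
    Ioc_subset_Icc_self

theorem RSint_add (ha : ContinuousOn a (Icc 0 T)) (hf : ContDiff ℝ 1 f) (hg : ContDiff ℝ 1 g) :
    RSint T (f + g) a = RSint T f a + RSint T g a := by
  have hderiv : deriv (f + g) = deriv f + deriv g :=
    funext fun r => deriv_add (hf.differentiable one_ne_zero r) (hg.differentiable one_ne_zero r)
  simp only [RSint, hderiv, Pi.add_apply, mul_add,
    integral_add (integrableOn_mul_deriv ha hf) (integrableOn_mul_deriv ha hg)]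
  ring

theorem RSint_const_smul (c : ℝ) : RSint T (c • f) a = c * RSint T f a := by
  have hderiv : deriv (c • f) = c • deriv f := deriv_const_mul_field' c
  simp only [RSint, hderiv, Pi.smul_apply, smul_eq_mul, mul_left_comm (a _) c,
    integral_const_mul]
  ring

noncomputable def RSintLinearMap (T : ℝ) (a : ℝ → ℝ) (ha : ContinuousOn a (Icc 0 T)) :
    contDiffSubmodule ℝ ℝ ℝ 1 →ₗ[ℝ] ℝ where
  toFun f := RSint T f a
  map_add' f g := RSint_add ha f.2 g.2
  map_smul' c _ := RSint_const_smul c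

theorem sq_RSint_le {β : ℝ → ℝ} {M : ℝ} (hβ : ∀ r ∈ Ioc 0 T, 0 ≤ β r)
    (hM : ∀ f : ℝ → ℝ, ContDiff ℝ 1 f → RSint T f a - 1 / 2 * ∫ r in Ioc 0 T, f r ^ 2 * β r ≤ M)
    (hf : ContDiff ℝ 1 f) : RSint T f a ^ 2 ≤ 2 * M * ∫ r in Ioc 0 T, f r ^ 2 * β r := by
  refine sq_le_of_forall_mul_sub_le
    (setIntegral_nonneg measurableSet_Ioc fun r hr => mul_nonneg (sq_nonneg _) (hβ r hr))
    fun c => ?_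
  have := hM (c • f) (hf.const_smul c)
  simp only [RSint_const_smul, Pi.smul_apply, smul_eq_mul, mul_pow, mul_assoc,
    integral_const_mul] at this
  linarith

end RSint

noncomputable def weightedMeasure (T : ℝ) (β : ℝ → ℝ) : Measure ℝ :=
  (volume.restrict (Ioc 0 T)).withDensity fun r => ENNReal.ofReal (β r)

section weightedMeasure

variable {T : ℝ} {β : ℝ → ℝ}

theorem ae_weightedMeasure_mem_Ioc : ∀ᵐ r ∂weightedMeasure T β, r ∈ Ioc 0 T :=
  (withDensity_absolutelyContinuous _ _).ae_le (ae_restrict_mem measurableSet_Ioc)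

theorem isFiniteMeasure_weightedMeasure (hβc : ContinuousOn β (Icc 0 T)) :
    IsFiniteMeasure (weightedMeasure T β) :=
  isFiniteMeasure_withDensity_ofReal (hβc.integrableOn_Icc.mono_set Ioc_subset_Icc_self).2

theorem memLp_weightedMeasure [IsFiniteMeasure (weightedMeasure T β)] {f : ℝ → ℝ}
    (hf : Continuous f) (p : ENNReal) : MemLp f p (weightedMeasure T β) := by
  obtain ⟨C, hC⟩ := isCompact_Icc.exists_bound_of_continuousOn hf.continuousOn (s := Icc 0 T)
  exact MemLp.of_bound hf.aestronglyMeasurable C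
    (ae_weightedMeasure_mem_Ioc.mono fun r hr => hC r (Ioc_subset_Icc_self hr))

theorem integral_weightedMeasure (hβc : ContinuousOn β (Icc 0 T))
    (hβ : ∀ r ∈ Ioc 0 T, 0 ≤ β r) (g : ℝ → ℝ) :
    ∫ r, g r ∂weightedMeasure T β = ∫ r in Ioc 0 T, g r * β r := by
  rw [weightedMeasure, integral_withDensity_eq_integral_toReal_smul₀
    ((hβc.mono Ioc_subset_Icc_self).aemeasurable measurableSet_Ioc).ennreal_ofReal
    (ae_of_all _ fun _ => ENNReal.ofReal_lt_top)]
  refine setIntegral_congr_fun measurableSet_Ioc fun r hr => ?_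
  rw [ENNReal.toReal_ofReal (hβ r hr), smul_eq_mul, mul_comm]

theorem restrict_Iic_weightedMeasure {t : ℝ} (ht : t ≤ T) :
    (weightedMeasure T β).restrict (Iic t) = weightedMeasure t β := by
  rw [weightedMeasure, restrict_withDensity measurableSet_Iic,
    Measure.restrict_restrict measurableSet_Iic, Iic_inter_Ioc_of_le ht, weightedMeasure]

theorem lintegral_weightedMeasure (hβc : ContinuousOn β (Icc 0 T)) {g : ℝ → ENNReal}
    (hg : AEMeasurable g (volume.restrict (Ioc 0 T))) :
    ∫⁻ r, g r ∂weightedMeasure T β = ∫⁻ r in Ioc 0 T, ENNReal.ofReal (β r) * g r :=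
  lintegral_withDensity_eq_lintegral_mul₀
    ((hβc.mono Ioc_subset_Icc_self).aemeasurable measurableSet_Ioc).ennreal_ofReal hg

end weightedMeasure

section approximation

variable {T t ε δ : ℝ} {F α : ℝ → ℝ}

theorem integral_Ioc_deriv_eq_sub (hT : 0 ≤ T) (hF : ContDiff ℝ 1 F) :
    ∫ r in Ioc 0 T, deriv F r = F T - F 0 := by
  rw [← intervalIntegral.integral_of_le hT]
  exact intervalIntegral.integral_deriv_eq_sub
    (fun r _ => (hF.differentiable one_ne_zero).differentiableAt)
    ((hF.continuous_deriv le_rfl).intervalIntegrable 0 T)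

theorem RSint_sub_eq (hT : 0 ≤ T) (hF : ContDiff ℝ 1 F) (hF0 : F 0 = 1)
    (hα : ContinuousOn α (Icc 0 T)) (c : ℝ) :
    RSint T F α - c = F T * (α T - c) - ∫ r in Ioc 0 T, (α r - c) * deriv F r := by
  have hint : IntegrableOn (fun r => c * deriv F r) (Ioc 0 T) :=
    integrableOn_mul_deriv continuousOn_const hF
  simp only [sub_mul]
  rw [integral_sub (integrableOn_mul_deriv hα hF) hint, integral_const_mul,
    integral_Ioc_deriv_eq_sub hT hF, hF0, RSint]
  ring

theorem deriv_eq_zero_of_notMem_Icc (hF1 : ∀ r ≤ t, F r = 1) (hF0 : ∀ r, t + ε ≤ r → F r = 0)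
    {r : ℝ} (hr : r ∉ Icc t (t + ε)) : deriv F r = 0 := by
  rcases not_and_or.mp hr with hr | hr
  · have : F =ᶠ[𝓝 r] fun _ => 1 :=
      (eventually_lt_nhds (not_le.mp hr)).mono fun x hx => hF1 x hx.le
    rw [this.deriv_eq, deriv_const]
  · have : F =ᶠ[𝓝 r] fun _ => 0 :=
      (eventually_gt_nhds (not_le.mp hr)).mono fun x hx => hF0 x hx.le
    rw [this.deriv_eq, deriv_const]

theorem abs_RSint_sub_le (hF : ContDiff ℝ 1 F) (hanti : Antitone F)
    (hF1 : ∀ r ≤ t, F r = 1) (hF0 : ∀ r, t + ε ≤ r → F r = 0)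
    (hα : ContinuousOn α (Icc 0 T)) (ht : t ∈ Icc 0 T)
    (hδ : ∀ r ∈ Icc 0 T, r ∈ Icc t (t + ε) → |α r - α t| ≤ δ) :
    |RSint T F α - α t| ≤ δ := by
  have hT : 0 ≤ T := ht.1.trans ht.2
  have hFT : 0 ≤ F T :=
    (hF0 _ (le_max_right T (t + ε))).symm.le.trans (hanti (le_max_left T (t + ε)))
  have hboundary : |F T * (α T - α t)| ≤ δ * F T := by
    rw [abs_mul, abs_of_nonneg hFT, mul_comm]
    rcases le_or_gt (t + ε) T with h | h
    · simp [hF0 T h]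
    · exact mul_le_mul_of_nonneg_right (hδ T ⟨hT, le_rfl⟩ ⟨ht.2, h.le⟩) hFT
  -- `-F'` is a nonnegative density supported in `[t, t + ε]`, of total mass `1 - F T` on `(0, T]`
  have hinterior : |∫ r in Ioc 0 T, (α r - α t) * deriv F r| ≤ δ * (1 - F T) := by
    calc |∫ r in Ioc 0 T, (α r - α t) * deriv F r|
        ≤ ∫ r in Ioc 0 T, -δ * deriv F r := by
          refine norm_integral_le_of_norm_le (f := fun r => (α r - α t) * deriv F r)
            (integrableOn_mul_deriv (a := fun _ => -δ) continuousOn_const hF) ?_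
          refine (ae_restrict_mem measurableSet_Ioc).mono fun r hr => ?_
          rw [Real.norm_eq_abs, abs_mul, abs_of_nonpos hanti.deriv_nonpos]
          by_cases hr' : r ∈ Icc t (t + ε)
          · simpa only [neg_mul, mul_neg] using mul_le_mul_of_nonneg_right
              (hδ r (Ioc_subset_Icc_self hr) hr') (neg_nonneg.mpr hanti.deriv_nonpos)
          · simp [deriv_eq_zero_of_notMem_Icc hF1 hF0 hr']
      _ = δ * (1 - F T) := by
          rw [integral_const_mul, integral_Ioc_deriv_eq_sub hT hF, hF1 0 ht.1]
          ring
  rw [RSint_sub_eq hT hF (hF1 0 ht.1) hα]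
  calc |F T * (α T - α t) - ∫ r in Ioc 0 T, (α r - α t) * deriv F r|
      ≤ δ * F T + δ * (1 - F T) := (abs_sub _ _).trans (add_le_add hboundary hinterior)
    _ = δ := by ring

end approximation

noncomputable def rampDown (t ε r : ℝ) : ℝ :=
  Real.smoothTransition ((t + ε - r) / ε)

section rampDown

variable {t ε : ℝ}

theorem contDiff_rampDown {n : ℕ∞} : ContDiff ℝ n (rampDown t ε) :=
  Real.smoothTransition.contDiff.comp ((contDiff_const.sub contDiff_id).div_const ε)

theorem antitone_rampDown (hε : 0 < ε) : Antitone (rampDown t ε) := fun _ _ h =>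
  Real.smoothTransition.monotone (div_le_div_of_nonneg_right (by linarith) hε.le)

theorem rampDown_of_le (hε : 0 < ε) {r : ℝ} (hr : r ≤ t) : rampDown t ε r = 1 :=
  Real.smoothTransition.one_of_one_le ((le_div_iff₀ hε).mpr (by linarith))

theorem rampDown_of_ge (hε : 0 < ε) {r : ℝ} (hr : t + ε ≤ r) : rampDown t ε r = 0 :=
  Real.smoothTransition.zero_of_nonpos (div_nonpos_of_nonpos_of_nonneg (by linarith) hε.le)

theorem memLp_rampDown (μ : Measure ℝ) [IsFiniteMeasure μ] (p : ENNReal) :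
    MemLp (rampDown t ε) p μ :=
  MemLp.of_bound (contDiff_rampDown (n := 0)).continuous.aestronglyMeasurable 1
    (ae_of_all _ fun _ => by
      rw [Real.norm_eq_abs, rampDown, abs_of_nonneg (Real.smoothTransition.nonneg _)]
      exact Real.smoothTransition.le_one _)

theorem tendsto_RSint_rampDown {T : ℝ} {α : ℝ → ℝ} (hα : ContinuousOn α (Icc 0 T))
    (ht : t ∈ Icc 0 T) :
    Tendsto (fun ε => RSint T (rampDown t ε) α) (𝓝[>] 0) (𝓝 (α t)) := by
  refine Metric.tendsto_nhds.mpr fun δ hδ => ?_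
  obtain ⟨η, hη, hαη⟩ := Metric.continuousWithinAt_iff.mp (hα t ht) (δ / 2) (half_pos hδ)
  filter_upwards [Ioo_mem_nhdsGT hη] with ε hε
  refine (abs_RSint_sub_le contDiff_rampDown (antitone_rampDown hε.1)
    (fun r => rampDown_of_le hε.1) (fun r => rampDown_of_ge hε.1) hα ht
    fun r hr hr' => ?_).trans_lt (half_lt_self hδ)
  refine (hαη hr ?_).le
  rw [Real.dist_eq, abs_of_nonneg (by linarith [hr'.1])]
  linarith [hr'.2, hε.2]

theorem abs_rampDown_sub_indicator_le (hε : 0 < ε) (r : ℝ) :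
    |rampDown t ε r - (Iic t).indicator (fun _ => 1) r| ≤
      (Ioc t (t + ε)).indicator (fun _ => 1) r := by
  rcases le_or_gt r t with hrt | hrt
  · simp [rampDown_of_le hε hrt, hrt]
  rcases le_or_gt r (t + ε) with hrε | hrε
  · rw [indicator_of_notMem (notMem_Iic.mpr hrt),
      indicator_of_mem (show r ∈ Ioc t (t + ε) from ⟨hrt, hrε⟩), sub_zero, rampDown,
      abs_of_nonneg (Real.smoothTransition.nonneg _)]
    exact Real.smoothTransition.le_one _
  · simp [rampDown_of_ge hε hrε.le, hrt.not_ge, hrε.not_ge]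

theorem tendsto_toLp_rampDown {μ : Measure ℝ} [IsFiniteMeasure μ] (t : ℝ) :
    Tendsto (fun ε => (memLp_rampDown (t := t) (ε := ε) μ 2).toLp (rampDown t ε)) (𝓝[>] 0)
      (𝓝 (indicatorConstLp 2 measurableSet_Iic (measure_ne_top μ (Iic t)) (1 : ℝ))) := by
  rw [Lp.tendsto_Lp_iff_tendsto_eLpNorm']
  have hgap : Tendsto (fun ε => μ (Ioc t (t + ε))) (𝓝[>] 0) (𝓝 0) := by
    have hempty : ⋂ ε > (0 : ℝ), Ioc t (t + ε) = ∅ :=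
      eq_empty_of_forall_notMem fun r hr => by
        simp only [mem_iInter₂, mem_Ioc] at hr
        have := (hr 1 one_pos).1
        linarith [(hr ((r - t) / 2) (by linarith)).2]
    simpa [hempty, Function.comp_def] using tendsto_measure_biInter_gt (μ := μ)
      (s := fun ε => Ioc t (t + ε)) (fun _ _ => measurableSet_Ioc.nullMeasurableSet)
      (fun _ _ _ hij => Ioc_subset_Ioc_right (by linarith)) ⟨1, one_pos, measure_ne_top μ _⟩
  have hbound : ∀ ε > 0, eLpNorm (⇑((memLp_rampDown μ 2).toLp (rampDown t ε)) -
      ⇑(indicatorConstLp 2 measurableSet_Iic (measure_ne_top μ (Iic t)) (1 : ℝ))) 2 μ ≤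
      μ (Ioc t (t + ε)) ^ (1 / (2 : ENNReal).toReal) := by
    intro ε hε
    calc _ ≤ eLpNorm ((Ioc t (t + ε)).indicator fun _ => (1 : ℝ)) 2 μ := by
          refine eLpNorm_mono_ae ?_
          filter_upwards [(memLp_rampDown (t := t) (ε := ε) μ 2).coeFn_toLp,
            indicatorConstLp_coeFn (p := 2) (hs := measurableSet_Iic (a := t))
              (hμs := measure_ne_top μ _) (c := (1 : ℝ))]
            with r h1 h2
          rw [Pi.sub_apply, h1, h2, Real.norm_eq_abs, Real.norm_eq_abs,
            abs_of_nonneg (indicator_nonneg (fun _ _ => zero_le_one) _)]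
          exact abs_rampDown_sub_indicator_le hε r
      _ ≤ _ := by simpa using eLpNorm_indicator_const_le (μ := μ) (s := Ioc t (t + ε)) (1 : ℝ) 2
  refine tendsto_of_tendsto_of_tendsto_of_le_of_le' tendsto_const_nhds ?_
    (Eventually.of_forall fun _ => zero_le) (eventually_mem_nhdsWithin.mono hbound)
  simpa [Function.comp_def] using
    (ENNReal.continuous_rpow_const (y := 1 / (2 : ENNReal).toReal).tendsto 0).comp hgap

end rampDown

theorem MeasureTheory.MemLp.norm_toLp_sq {X : Type*} [MeasurableSpace X] {μ : Measure X}
    {f : X → ℝ} (hf : MemLp f 2 μ) : ‖hf.toLp f‖ ^ 2 = ∫ x, f x ^ 2 ∂μ := by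
  rw [← real_inner_self_eq_norm_sq, L2.inner_def]
  refine integral_congr_ae ?_
  filter_upwards [hf.coeFn_toLp] with x hx
  rw [RCLike.inner_apply, conj_trivial, hx, sq]

@[simps]
noncomputable def contDiffToLp (T : ℝ) (β : ℝ → ℝ) [IsFiniteMeasure (weightedMeasure T β)] :
    contDiffSubmodule ℝ ℝ ℝ 1 →ₗ[ℝ] Lp ℝ 2 (weightedMeasure T β) where
  toFun f := (memLp_weightedMeasure (mem_contDiffSubmodule.mp f.2).continuous 2).toLp f
  map_add' _ _ := MemLp.toLp_add _ _
  map_smul' c _ := MemLp.toLp_const_smul c _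

theorem stmt10_general (T : ℝ) (α β : ℝ → ℝ)
    (hαc : ContinuousOn α (Set.Icc 0 T)) (hβc : ContinuousOn β (Set.Icc 0 T))
    (hβ : ∀ t ∈ Set.Icc 0 T, 0 ≤ β t)
    (hbdd : BddAbove {x : ℝ | ∃ f : ℝ → ℝ, ContDiff ℝ 1 f ∧
      x = f T * α T - (∫ r in Set.Ioc 0 T, α r * deriv f r)
          - (1 / 2) * ∫ r in Set.Ioc 0 T, (f r) ^ 2 * β r}) :
    ∃ k : ℝ → ℝ, Measurable k ∧
      (∫⁻ r in Set.Ioc 0 T, ENNReal.ofReal ((k r) ^ 2 * β r)) < ⊤ ∧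
      ∀ t ∈ Set.Icc 0 T, α t = ∫ s in Set.Ioc 0 t, k s * β s := by
  have hβ' : ∀ r ∈ Ioc 0 T, 0 ≤ β r := fun r hr => hβ r (Ioc_subset_Icc_self hr)
  have := isFiniteMeasure_weightedMeasure hβc
  obtain ⟨M, hM⟩ := hbdd
  have hbound : ∀ f, ‖RSintLinearMap T α hαc f‖ ≤ √(2 * M) * ‖contDiffToLp T β f‖ := fun f => by
    rw [Real.norm_eq_abs, ← Real.sqrt_sq (norm_nonneg _), ← Real.sqrt_mul' _ (sq_nonneg _)]
    refine Real.abs_le_sqrt ?_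
    rw [contDiffToLp_apply, MemLp.norm_toLp_sq, integral_weightedMeasure hβc hβ']
    exact sq_RSint_le hβ' (fun f hf => hM ⟨f, hf, rfl⟩) f.2
  obtain ⟨Φ, hΦ⟩ := (contDiffToLp T β).exists_continuousLinearMap_comp_eq _ _ hbound
  obtain ⟨y, rfl⟩ := (InnerProductSpace.toDual ℝ _).surjective Φ
  refine ⟨y, (Lp.stronglyMeasurable y).measurable, ?_, fun t ht => ?_⟩
  · calc _ = ∫⁻ r, ENNReal.ofReal (y r ^ 2) ∂weightedMeasure T β := by
          rw [lintegral_weightedMeasure hβc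
            ((Lp.stronglyMeasurable y).measurable.pow_const 2).ennreal_ofReal.aemeasurable]
          refine setLIntegral_congr_fun measurableSet_Ioc fun r _ => ?_
          rw [ENNReal.ofReal_mul (sq_nonneg _), mul_comm]
      _ < ⊤ := (Lp.memLp y).integrable_sq.lintegral_lt_top
  · have hlim := (((InnerProductSpace.toDual ℝ _ y).continuous.tendsto _).comp
      (tendsto_toLp_rampDown (μ := weightedMeasure T β) t)).congr
      fun ε => hΦ ⟨rampDown t ε, contDiff_rampDown⟩
    rw [tendsto_nhds_unique (tendsto_RSint_rampDown hαc ht) hlim,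
      InnerProductSpace.toDual_apply_apply, real_inner_comm, L2.inner_indicatorConstLp_one,
      restrict_Iic_weightedMeasure ht.2,
      integral_weightedMeasure (hβc.mono (Icc_subset_Icc_right ht.2))
        fun r hr => hβ' r (Ioc_subset_Ioc_right ht.2 hr)]

/-- If `sup_{f ∈ C¹} { ∫₀ᵀ f dα − ½∫₀ᵀ f² β } < ∞` (Stieltjes integral in
integration-by-parts form), then `α` is absolutely continuous with `α' = kβ` a.e. for a
measurable `k` with `∫₀ᵀ k² β < ∞`; equivalently `α t = ∫₀ᵗ k β`. -/
theorem stmt10 (T : ℝ) (hT : 0 < T) (α β : ℝ → ℝ)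
    (hαc : ContinuousOn α (Set.Icc 0 T)) (hβc : ContinuousOn β (Set.Icc 0 T))
    (hα0 : α 0 = 0) (hβ0 : β 0 = 0) (hβ : ∀ t ∈ Set.Icc 0 T, 0 ≤ β t)
    (hbdd : BddAbove {x : ℝ | ∃ f : ℝ → ℝ, ContDiff ℝ 1 f ∧
      x = f T * α T - (∫ r in Set.Ioc 0 T, α r * deriv f r)
          - (1 / 2) * ∫ r in Set.Ioc 0 T, (f r) ^ 2 * β r}) :
    ∃ k : ℝ → ℝ, Measurable k ∧
      (∫⁻ r in Set.Ioc 0 T, ENNReal.ofReal ((k r) ^ 2 * β r)) < ⊤ ∧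
      ∀ t ∈ Set.Icc 0 T, α t = ∫ s in Set.Ioc 0 t, k s * β s :=
  stmt10_general T α β hαc hβc hβ hbdd
end

section
/- Let T > 0, let u, v: [0,T] → ℝ be bounded measurable functions, and let p, q ∈ L²([0,T],ℝ). Then sup over f, g ∈ C¹([0,T],ℝ) of ∫₀^T { f(r)u(r)p(r) + g(r)v(r)q(r) − (f(r)u(r) + g(r)v(r))² } dr is finite if and only if p = q almost everywhere on the set {r ∈ [0,T] : u(r)v(r) ≠ 0}. -/
open MeasureTheory Set Filter

open Topology
open scoped ENNReal

theorem Real.measurable_sign : Measurable Real.sign :=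
  Measurable.ite measurableSet_Iio measurable_const
    (Measurable.ite measurableSet_Ioi measurable_const measurable_const)

theorem Real.abs_sign_le_one (x : ℝ) : |Real.sign x| ≤ 1 := by
  rcases Real.sign_apply_eq x with h | h | h <;> simp [h]

theorem mul_add_mul_sub_sq_le {F G p q : ℝ} (h : F = 0 ∨ G = 0 ∨ p = q) :
    F * p + G * q - (F + G) ^ 2 ≤ (p ^ 2 + q ^ 2) / 4 := by
  rcases h with rfl | rfl | rfl
  · nlinarith [sq_nonneg (G - q / 2), sq_nonneg p]
  · nlinarith [sq_nonneg (F - p / 2), sq_nonneg q]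
  · nlinarith [sq_nonneg (F + G - p / 2), sq_nonneg p]

section

variable {α : Type*} [MeasurableSpace α] {μ : Measure α}

theorem abs_integral_mul_le_sqrt_mul_sqrt {f g : α → ℝ} (hf : MemLp f 2 μ) (hg : MemLp g 2 μ) :
    |∫ x, f x * g x ∂μ| ≤ √(∫ x, f x ^ 2 ∂μ) * √(∫ x, g x ^ 2 ∂μ) := by
  have holder := integral_mul_norm_le_Lp_mul_Lq Real.HolderConjugate.two_two
    (by simpa using hf) (by simpa using hg)
  simp only [Real.norm_eq_abs, Real.rpow_two, sq_abs, ← Real.sqrt_eq_rpow] at holder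
  calc |∫ x, f x * g x ∂μ| ≤ ∫ x, |f x| * |g x| ∂μ := by
        simpa only [abs_mul] using abs_integral_le_integral_abs (f := fun x => f x * g x)
    _ ≤ _ := holder

theorem tendsto_integral_mul_of_tendsto_integral_sq_sub {F : ℕ → α → ℝ} {F₀ w : α → ℝ}
    (hF : ∀ n, MemLp (F n) 2 μ) (hF₀ : MemLp F₀ 2 μ) (hw : MemLp w 2 μ)
    (hlim : Tendsto (fun n => ∫ x, (F n x - F₀ x) ^ 2 ∂μ) atTop (𝓝 0)) :
    Tendsto (fun n => ∫ x, F n x * w x ∂μ) atTop (𝓝 (∫ x, F₀ x * w x ∂μ)) := by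
  rw [tendsto_iff_norm_sub_tendsto_zero]
  have hbound : ∀ n, ‖∫ x, F n x * w x ∂μ - ∫ x, F₀ x * w x ∂μ‖
      ≤ √(∫ x, (F n x - F₀ x) ^ 2 ∂μ) * √(∫ x, w x ^ 2 ∂μ) := fun n => by
    have hint : ∀ {f : α → ℝ}, MemLp f 2 μ → Integrable (fun x => f x * w x) μ :=
      fun hf => hf.integrable_mul hw
    rw [Real.norm_eq_abs, ← integral_sub (hint (hF n)) (hint hF₀)]
    simpa only [Pi.sub_apply, sub_mul] using
      abs_integral_mul_le_sqrt_mul_sqrt ((hF n).sub hF₀) hw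
  refine squeeze_zero (fun n => norm_nonneg _) hbound ?_
  simpa using (hlim.sqrt).mul_const √(∫ x, w x ^ 2 ∂μ)

theorem tendsto_integral_sq_mul_sub_mul {f : ℕ → α → ℝ} {f₀ w : α → ℝ} {C : ℝ}
    (hf : ∀ n, MemLp (f n) 2 μ) (hf₀ : MemLp f₀ 2 μ) (hw : ∀ᵐ x ∂μ, |w x| ≤ C)
    (hlim : Tendsto (fun n => ∫ x, (f n x - f₀ x) ^ 2 ∂μ) atTop (𝓝 0)) :
    Tendsto (fun n => ∫ x, (f n x * w x - f₀ x * w x) ^ 2 ∂μ) atTop (𝓝 0) := by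
  refine squeeze_zero (fun n => integral_nonneg fun x => sq_nonneg _) (fun n => ?_)
    (by simpa using hlim.const_mul (C ^ 2))
  rw [← integral_const_mul]
  refine integral_mono_of_nonneg (ae_of_all _ fun x => sq_nonneg _)
    (((hf n).sub hf₀).integrable_sq.const_mul _) ?_
  filter_upwards [hw] with x hx
  have hw2 : w x ^ 2 ≤ C ^ 2 := by nlinarith [abs_nonneg (w x), sq_abs (w x)]
  rw [← sub_mul, mul_pow, mul_comm (C ^ 2)]
  exact mul_le_mul_of_nonneg_left hw2 (sq_nonneg _)

theorem integral_scaled_mul_add_mul_sub_sq {F G p q : α → ℝ} (hF : MemLp F 2 μ)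
    (hG : MemLp G 2 μ) (hp : MemLp p 2 μ) (hq : MemLp q 2 μ) (t : ℝ) :
    ∫ x, (t * F x * p x + t * G x * q x - (t * F x + t * G x) ^ 2) ∂μ
      = t * (∫ x, F x * p x ∂μ + ∫ x, G x * q x ∂μ) - t ^ 2 * ∫ x, (F x + G x) ^ 2 ∂μ := by
  have hFp : Integrable (fun x => F x * p x) μ := hF.integrable_mul hp
  have hGq : Integrable (fun x => G x * q x) μ := hG.integrable_mul hq
  have hFG : Integrable (fun x => (F x + G x) ^ 2) μ := (hF.add hG).integrable_sq
  have hL : Integrable (fun x => t * (F x * p x + G x * q x)) μ := (hFp.add hGq).const_mul t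
  calc _ = ∫ x, (t * (F x * p x + G x * q x) - t ^ 2 * (F x + G x) ^ 2) ∂μ := by
        congr 1; ext x; ring
    _ = _ := by
        rw [integral_sub hL (hFG.const_mul _), integral_const_mul, integral_const_mul,
          integral_add hFp hGq]

theorem integral_mul_add_mul_nonpos_of_forall_scaled_le {F G : ℕ → α → ℝ} {F₀ G₀ p q : α → ℝ}
    {B : ℝ}
    (hF : ∀ n, MemLp (F n) 2 μ) (hG : ∀ n, MemLp (G n) 2 μ) (hF₀ : MemLp F₀ 2 μ)
    (hG₀ : MemLp G₀ 2 μ) (hp : MemLp p 2 μ) (hq : MemLp q 2 μ)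
    (hF_lim : Tendsto (fun n => ∫ x, (F n x - F₀ x) ^ 2 ∂μ) atTop (𝓝 0))
    (hG_lim : Tendsto (fun n => ∫ x, (G n x - G₀ x) ^ 2 ∂μ) atTop (𝓝 0))
    (hFG₀ : ∀ᵐ x ∂μ, F₀ x + G₀ x = 0)
    (hB : ∀ n t, ∫ x, (t * F n x * p x + t * G n x * q x - (t * F n x + t * G n x) ^ 2) ∂μ ≤ B) :
    ∫ x, (F₀ x * p x + G₀ x * q x) ∂μ ≤ 0 := by
  have hF₀p : Integrable (fun x => F₀ x * p x) μ := hF₀.integrable_mul hp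
  have hG₀q : Integrable (fun x => G₀ x * q x) μ := hG₀.integrable_mul hq
  rw [integral_add hF₀p hG₀q]
  set c := ∫ x, F₀ x * p x ∂μ + ∫ x, G₀ x * q x ∂μ
  have hL : Tendsto (fun n => ∫ x, F n x * p x ∂μ + ∫ x, G n x * q x ∂μ) atTop (𝓝 c) :=
    (tendsto_integral_mul_of_tendsto_integral_sq_sub hF hF₀ hp hF_lim).add
      (tendsto_integral_mul_of_tendsto_integral_sq_sub hG hG₀ hq hG_lim)
  have hQ : Tendsto (fun n => ∫ x, (F n x + G n x) ^ 2 ∂μ) atTop (𝓝 0) := by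
    refine squeeze_zero (fun n => integral_nonneg fun x => sq_nonneg _) (fun n => ?_)
      (by simpa using (hF_lim.add hG_lim).const_mul 2)
    have hF' : Integrable (fun x => (F n x - F₀ x) ^ 2) μ := ((hF n).sub hF₀).integrable_sq
    have hG' : Integrable (fun x => (G n x - G₀ x) ^ 2) μ := ((hG n).sub hG₀).integrable_sq
    rw [← integral_add hF' hG', ← integral_const_mul]
    refine integral_mono_of_nonneg (ae_of_all _ fun x => sq_nonneg _)
      ((hF'.add hG').const_mul 2) ?_
    filter_upwards [hFG₀] with x hx
    rw [show F n x + G n x = (F n x - F₀ x) + (G n x - G₀ x) by linear_combination hx]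
    nlinarith [sq_nonneg (F n x - F₀ x - (G n x - G₀ x))]
  have hlin : ∀ t, t * c ≤ B := fun t => by
    have hlim := (hL.const_mul t).sub (hQ.const_mul (t ^ 2))
    rw [mul_zero, sub_zero] at hlim
    exact le_of_tendsto' hlim fun n =>
      (integral_scaled_mul_add_mul_sub_sq (hF n) (hG n) hp hq t).symm.trans_le (hB n t)
  by_contra! hc
  have := hlin ((B + 1) / c)
  rw [div_mul_cancel₀ _ hc.ne'] at this
  linarith

theorem ae_eq_zero_of_integral_sign_mul_self_nonpos {g : α → ℝ} (hg : Integrable g μ)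
    (h : ∫ x, Real.sign (g x) * g x ∂μ ≤ 0) : ∀ᵐ x ∂μ, g x = 0 := by
  have hnonneg : 0 ≤ᵐ[μ] fun x => Real.sign (g x) * g x :=
    ae_of_all _ fun x => Real.sign_mul_nonneg _
  have hint : Integrable (fun x => Real.sign (g x) * g x) μ :=
    hg.bdd_mul (Real.measurable_sign.comp_aemeasurable hg.aemeasurable).aestronglyMeasurable
      (ae_of_all _ fun x => Real.abs_sign_le_one _)
  have hzero := (integral_eq_zero_iff_of_nonneg_ae hnonneg hint).1
    (le_antisymm h (integral_nonneg_of_ae hnonneg))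
  filter_upwards [hzero] with x hx
  by_contra hne
  exact (Real.sign_mul_pos_of_ne_zero _ hne).ne' hx

theorem integral_mul_add_mul_sub_sq_le_of_ae_imp_eq {u v p q : α → ℝ} (hp : MemLp p 2 μ)
    (hq : MemLp q 2 μ) (hpq : ∀ᵐ x ∂μ, u x * v x ≠ 0 → p x = q x) (f g : α → ℝ) :
    ∫ x, (f x * u x * p x + g x * v x * q x - (f x * u x + g x * v x) ^ 2) ∂μ
      ≤ ∫ x, (p x ^ 2 + q x ^ 2) / 4 ∂μ := by
  by_cases hint : Integrable
      (fun x => f x * u x * p x + g x * v x * q x - (f x * u x + g x * v x) ^ 2) μ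
  · refine integral_mono_ae hint ((hp.integrable_sq.add hq.integrable_sq).div_const 4) ?_
    filter_upwards [hpq] with x hx
    refine mul_add_mul_sub_sq_le ?_
    by_cases huv : u x * v x = 0
    · rcases mul_eq_zero.1 huv with h | h <;> simp [h]
    · exact Or.inr (Or.inr (hx huv))
  -- a non-integrable integrand has integral `0`, below the nonnegative bound
  · rw [integral_undef hint]
    exact integral_nonneg fun x => by positivity

end

theorem Continuous.memLp_of_ae_mem_isCompact {X : Type*} [TopologicalSpace X] [MeasurableSpace X]
    [OpensMeasurableSpace X] {μ : Measure X} [IsFiniteMeasure μ] {K : Set X} (hK : IsCompact K)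
    (hμK : ∀ᵐ x ∂μ, x ∈ K) {f : X → ℝ} (hf : Continuous f) (p : ENNReal) : MemLp f p μ := by
  obtain ⟨C, hC⟩ := hK.exists_bound_of_continuousOn hf.continuousOn
  exact MemLp.of_bound hf.aestronglyMeasurable C (hμK.mono hC)

section Polynomial

open Polynomial

variable {μ : Measure ℝ} [IsFiniteMeasure μ] {a b : ℝ}

theorem exists_polynomial_integral_sq_sub_le (hμ : ∀ᵐ x ∂μ, x ∈ Icc a b) {h : ℝ → ℝ}
    (hh : MemLp h 2 μ) {ε : ℝ} (hε : 0 < ε) : ∃ P : ℝ[X], ∫ x, (P.eval x - h x) ^ 2 ∂μ ≤ ε := by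
  obtain ⟨g, hgh, hg⟩ := (show MemLp h (ENNReal.ofReal 2) μ by simpa using hh)
    |>.exists_boundedContinuous_integral_rpow_sub_le two_pos (by positivity : 0 < ε / 4)
  simp only [Real.norm_eq_abs, Real.rpow_two, sq_abs] at hgh
  set m := μ.real univ
  set δ := √(ε / (4 * (m + 1)))
  obtain ⟨P, hP⟩ := exists_polynomial_near_of_continuousOn a b g g.continuous.continuousOn δ
    (by positivity)
  have hgh' : Integrable (fun x => (h x - g x) ^ 2) μ :=
    (hh.sub (by simpa using hg)).integrable_sq
  refine ⟨P, ?_⟩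
  calc ∫ x, (P.eval x - h x) ^ 2 ∂μ ≤ ∫ x, (2 * δ ^ 2 + 2 * (h x - g x) ^ 2) ∂μ := by
        refine integral_mono_of_nonneg (ae_of_all _ fun x => sq_nonneg _)
          ((integrable_const _).add (hgh'.const_mul 2)) ?_
        filter_upwards [hμ] with x hx
        have hPg := sq_le_sq' (abs_lt.1 (hP x hx)).1.le (abs_lt.1 (hP x hx)).2.le
        nlinarith [sq_nonneg (P.eval x - g x + (h x - g x))]
    _ = 2 * δ ^ 2 * m + 2 * ∫ x, (h x - g x) ^ 2 ∂μ := by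
        rw [integral_add (integrable_const _) (hgh'.const_mul 2), integral_const,
          integral_const_mul, smul_eq_mul, mul_comm m]
    _ ≤ ε := by
        have hδ : δ ^ 2 = ε / (4 * (m + 1)) := Real.sq_sqrt (by positivity)
        have hm : 0 ≤ m := measureReal_nonneg
        rw [hδ]
        have : ε / (4 * (m + 1)) * m ≤ ε / 4 := by
          rw [div_mul_eq_mul_div, div_le_div_iff₀ (by positivity) (by positivity)]
          nlinarith
        nlinarith

theorem exists_seq_polynomial_tendsto_integral_sq_sub (hμ : ∀ᵐ x ∂μ, x ∈ Icc a b) {h : ℝ → ℝ}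
    (hh : MemLp h 2 μ) :
    ∃ P : ℕ → ℝ[X], Tendsto (fun n => ∫ x, ((P n).eval x - h x) ^ 2 ∂μ) atTop (𝓝 0) := by
  choose P hP using fun n : ℕ =>
    exists_polynomial_integral_sq_sub_le hμ hh (Nat.one_div_pos_of_nat (n := n))
  exact ⟨P, squeeze_zero (fun n => integral_nonneg fun x => sq_nonneg _) hP
    tendsto_one_div_add_atTop_nhds_zero_nat⟩

end Polynomial

open Polynomial in
theorem ae_imp_eq_of_bddAbove {μ : Measure ℝ} [IsFiniteMeasure μ] {a b : ℝ}
    (hμ : ∀ᵐ x ∂μ, x ∈ Icc a b) {u v p q : ℝ → ℝ} {Cu Cv : ℝ}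
    (hu : AEStronglyMeasurable u μ) (hv : AEStronglyMeasurable v μ)
    (huC : ∀ᵐ x ∂μ, |u x| ≤ Cu) (hvC : ∀ᵐ x ∂μ, |v x| ≤ Cv)
    (hp : MemLp p 2 μ) (hq : MemLp q 2 μ)
    (hbdd : BddAbove {y | ∃ f g : ℝ → ℝ, ContDiff ℝ 1 f ∧ ContDiff ℝ 1 g ∧
      y = ∫ x, (f x * u x * p x + g x * v x * q x - (f x * u x + g x * v x) ^ 2) ∂μ}) :
    ∀ᵐ x ∂μ, u x * v x ≠ 0 → p x = q x := by
  obtain ⟨B, hB⟩ := hbdd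
  have hu' : MemLp u ∞ μ := memLp_top_of_bound hu Cu (by simpa only [Real.norm_eq_abs] using huC)
  have hv' : MemLp v ∞ μ := memLp_top_of_bound hv Cv (by simpa only [Real.norm_eq_abs] using hvC)
  set d := fun x => u x * v x * (p x - q x)
  have huv : MemLp (fun x => u x * v x) ∞ μ := hv'.mul' hu'
  have hd : MemLp d 2 μ := (hp.sub hq).mul' huv
  set σ := fun x => Real.sign (d x)
  have hσ : MemLp σ ∞ μ :=
    memLp_top_of_bound
      (Real.measurable_sign.comp_aemeasurable hd.1.aemeasurable).aestronglyMeasurable 1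
      (ae_of_all _ fun x => Real.abs_sign_le_one _)
  have hf₀ : MemLp (fun x => σ x * v x) 2 μ := (hv'.mul' hσ).mono_exponent le_top
  have hg₀ : MemLp (fun x => -(σ x * u x)) 2 μ := (hu'.mul' hσ).neg.mono_exponent le_top
  obtain ⟨P, hP⟩ := exists_seq_polynomial_tendsto_integral_sq_sub hμ hf₀
  obtain ⟨Q, hQ⟩ := exists_seq_polynomial_tendsto_integral_sq_sub hμ hg₀
  have hPQ : ∀ R : ℝ[X], MemLp (fun x => R.eval x) 2 μ := fun R =>
    R.continuous.memLp_of_ae_mem_isCompact isCompact_Icc hμ 2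
  have hC1 : ∀ (R : ℝ[X]) (t : ℝ), ContDiff ℝ 1 (fun x => t * R.eval x) := fun R t =>
    contDiff_const.mul (by simpa using R.contDiff_aeval (𝕜 := ℝ) 1)
  have hpair := integral_mul_add_mul_nonpos_of_forall_scaled_le
    (F := fun n x => (P n).eval x * u x) (G := fun n x => (Q n).eval x * v x)
    (fun n => hu'.mul' (hPQ (P n))) (fun n => hv'.mul' (hPQ (Q n)))
    (hu'.mul' hf₀) (hv'.mul' hg₀) hp hq
    (tendsto_integral_sq_mul_sub_mul (fun n => hPQ (P n)) hf₀ huC hP)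
    (tendsto_integral_sq_mul_sub_mul (fun n => hPQ (Q n)) hg₀ hvC hQ)
    (ae_of_all _ fun x => by ring)
    (fun n t => hB ⟨_, _, hC1 (P n) t, hC1 (Q n) t, by simp only [mul_assoc]⟩)
  have hσd : ∫ x, σ x * d x ∂μ ≤ 0 := by
    convert hpair using 3 with x
    ring
  filter_upwards [ae_eq_zero_of_integral_sign_mul_self_nonpos (hd.integrable one_le_two) hσd]
    with x hx huv
  exact sub_eq_zero.1 ((mul_eq_zero.1 hx).resolve_left huv)

theorem stmt11_general (T : ℝ) (u v p q : ℝ → ℝ)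
    (hu : Measurable u) (hv : Measurable v)
    (hub : ∃ C : ℝ, ∀ t ∈ Set.Icc 0 T, |u t| ≤ C)
    (hvb : ∃ C : ℝ, ∀ t ∈ Set.Icc 0 T, |v t| ≤ C)
    (hp : MeasureTheory.MemLp p 2 (MeasureTheory.volume.restrict (Set.Ioc 0 T)))
    (hq : MeasureTheory.MemLp q 2 (MeasureTheory.volume.restrict (Set.Ioc 0 T))) :
    BddAbove {x : ℝ | ∃ f g : ℝ → ℝ, ContDiff ℝ 1 f ∧ ContDiff ℝ 1 g ∧
        x = ∫ r in Set.Ioc 0 T,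
          (f r * u r * p r + g r * v r * q r - (f r * u r + g r * v r) ^ 2)} ↔
      (∀ᵐ r ∂(MeasureTheory.volume.restrict (Set.Ioc 0 T)),
        u r * v r ≠ 0 → p r = q r) := by
  have hμ : ∀ᵐ r ∂(volume.restrict (Ioc 0 T)), r ∈ Icc 0 T :=
    (ae_restrict_mem measurableSet_Ioc).mono fun _ hr => Ioc_subset_Icc_self hr
  obtain ⟨Cu, hCu⟩ := hub
  obtain ⟨Cv, hCv⟩ := hvb
  refine ⟨ae_imp_eq_of_bddAbove hμ hu.aestronglyMeasurable hv.aestronglyMeasurable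
    (hμ.mono hCu) (hμ.mono hCv) hp hq, fun hpq => ⟨∫ r in Ioc 0 T, (p r ^ 2 + q r ^ 2) / 4, ?_⟩⟩
  rintro x ⟨f, g, -, -, rfl⟩
  exact integral_mul_add_mul_sub_sq_le_of_ae_imp_eq hp hq hpq f g

/-- For bounded measurable `u, v` and `p, q ∈ L²([0,T],ℝ)`,
`sup_{f,g ∈ C¹} ∫₀ᵀ { fup + gvq − (fu+gv)² } dr < ∞` iff `p = q` a.e. on `{uv ≠ 0}`. -/
theorem stmt11 (T : ℝ) (hT : 0 < T) (u v p q : ℝ → ℝ)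
    (hu : Measurable u) (hv : Measurable v)
    (hub : ∃ C : ℝ, ∀ t ∈ Set.Icc 0 T, |u t| ≤ C)
    (hvb : ∃ C : ℝ, ∀ t ∈ Set.Icc 0 T, |v t| ≤ C)
    (hp : MeasureTheory.MemLp p 2 (MeasureTheory.volume.restrict (Set.Ioc 0 T)))
    (hq : MeasureTheory.MemLp q 2 (MeasureTheory.volume.restrict (Set.Ioc 0 T))) :
    BddAbove {x : ℝ | ∃ f g : ℝ → ℝ, ContDiff ℝ 1 f ∧ ContDiff ℝ 1 g ∧
        x = ∫ r in Set.Ioc 0 T,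
          (f r * u r * p r + g r * v r * q r - (f r * u r + g r * v r) ^ 2)} ↔
      (∀ᵐ r ∂(MeasureTheory.volume.restrict (Set.Ioc 0 T)),
        u r * v r ≠ 0 → p r = q r) :=
  stmt11_general T u v p q hu hv hub hvb hp hq
end
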